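/- arXiv:1702.00470 — 9 statements merged into one kernel-verified Lean document; each statement's English description precedes it below -/
import Mathlib

section
/- Let k ≤ n and l ≤ m be integers and let f₁, f₂ be Laurent polynomials as in the context, with nonzero extreme coefficients a_k, a_n, b_l, b_m. Then b_l^{−k} · b_m^{n} · Π^{[1]} = (−1)^{k·l + n·m} · a_k^{−l} · a_n^{m} · Π^{[2]}. -/
/-!
With `d₁ = n - k` and `d₂ = m - l`, Vieta's formula `∏_{y ∈ Y} y = (-1)^{d₂} b_l / b_m` absorbs
the factors `y^k` together with `b_l^{-k} b_m^k`, so the left side is `± b_m^{d₁} ∏_y P₁(y)`, which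
is the resultant `Res(P₂, P₁)`; likewise the right side is `± a_n^{d₂} ∏_x P₂(x) = ± Res(P₁, P₂)`.
The two resultants differ by `(-1)^{d₁ d₂}`, and the remaining signs agree up to `(-1)^{2nl}`.
-/

open Polynomial

theorem neg_one_zpow_eq_of_even_sub {K : Type*} [DivisionRing K] {a b : ℤ} (h : Even (a - b)) :
    (-1 : K) ^ a = (-1) ^ b := by
  rw [← sub_add_cancel a b, zpow_add₀ (neg_ne_zero.mpr one_ne_zero), h.neg_one_zpow, one_mul]

namespace Polynomial

theorem leadingCoeff_pow_mul_prod_roots_eval_comm {R : Type*} [CommRing R] [IsDomain R]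
    {f g : R[X]} (hf : f.Splits) (hg : g.Splits) :
    g.leadingCoeff ^ f.natDegree * (g.roots.map f.eval).prod =
      (-1) ^ (f.natDegree * g.natDegree) * f.leadingCoeff ^ g.natDegree *
        (f.roots.map g.eval).prod := by
  rw [← resultant_eq_prod_eval g f _ le_rfl hg, resultant_comm, mul_comm f.natDegree,
    resultant_eq_prod_eval f g _ le_rfl hf, mul_assoc]

theorem Splits.coeff_zero_zpow_neg_mul_leadingCoeff_zpow_mul_prod_roots {K : Type*} [Field K]
    {f : K[X]} (hf : f.Splits) (h0 : f.coeff 0 ≠ 0) (k : ℤ) (g : K → K) :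
    f.coeff 0 ^ (-k) * f.leadingCoeff ^ k * (f.roots.map fun y => y ^ k * g y).prod =
      (-1) ^ (k * f.natDegree) * (f.roots.map g).prod := by
  have hprod : f.leadingCoeff * f.roots.prod = (-1) ^ f.natDegree * f.coeff 0 := by
    rw [hf.coeff_zero_eq_leadingCoeff_mul_prod_roots, ← mul_assoc, ← mul_assoc, ← pow_add,
      ← two_mul, pow_mul, neg_one_sq, one_pow, one_mul]
  rw [Multiset.prod_map_mul, Multiset.prod_map_zpow, Multiset.map_id']
  calc f.coeff 0 ^ (-k) * f.leadingCoeff ^ k * (f.roots.prod ^ k * (f.roots.map g).prod)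
      = f.coeff 0 ^ (-k) * (f.leadingCoeff * f.roots.prod) ^ k * (f.roots.map g).prod := by
        rw [mul_zpow]; ring
    _ = f.coeff 0 ^ (-k) * f.coeff 0 ^ k * (-1) ^ (k * f.natDegree) * (f.roots.map g).prod := by
        rw [hprod, mul_zpow, ← zpow_natCast, ← zpow_mul, mul_comm (f.natDegree : ℤ)]; ring
    _ = (-1) ^ (k * f.natDegree) * (f.roots.map g).prod := by
        rw [← zpow_add₀ h0, neg_add_cancel, zpow_zero, one_mul]

end Polynomial

/-- For Laurent polynomials `f₁ z = z^k * P₁ z` and `f₂ z = z^l * P₂ z`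
with nonzero extreme coefficients `a_k = P₁(0)`, `a_n = leadingCoeff P₁`,
`b_l = P₂(0)`, `b_m = leadingCoeff P₂`, one has
`b_l^{-k} * b_m^n * Π^{[1]} = (-1)^{k l + n m} * a_k^{-l} * a_n^m * Π^{[2]}`,
where `Π^{[1]}` is the product of `f₁` over the roots of `P₂` (with multiplicity)
and `Π^{[2]}` is the product of `f₂` over the roots of `P₁`. -/
theorem stmt0 (k n l m : ℤ) (hkn : k ≤ n) (hlm : l ≤ m)
    (P₁ P₂ : Polynomial ℂ)
    (hd₁ : P₁.natDegree = (n - k).toNat) (hd₂ : P₂.natDegree = (m - l).toNat)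
    (ak an bl bm : ℂ)
    (hak : P₁.coeff 0 = ak) (han : P₁.leadingCoeff = an)
    (hbl : P₂.coeff 0 = bl) (hbm : P₂.leadingCoeff = bm)
    (hak0 : ak ≠ 0) (han0 : an ≠ 0) (hbl0 : bl ≠ 0) (hbm0 : bm ≠ 0) :
    bl ^ (-k) * bm ^ n * (P₂.roots.map fun y => y ^ k * P₁.eval y).prod =
      (-1 : ℂ) ^ (k * l + n * m) * ak ^ (-l) * an ^ m *
        (P₁.roots.map fun x => x ^ l * P₂.eval x).prod := by
  subst hak han hbl hbm
  have hs₁ : P₁.Splits := IsAlgClosed.splits P₁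
  have hs₂ : P₂.Splits := IsAlgClosed.splits P₂
  have hd₁' : (P₁.natDegree : ℤ) = n - k := by rw [hd₁, Int.toNat_of_nonneg (by omega)]
  have hd₂' : (P₂.natDegree : ℤ) = m - l := by rw [hd₂, Int.toNat_of_nonneg (by omega)]
  have hprod₁ := hs₂.coeff_zero_zpow_neg_mul_leadingCoeff_zpow_mul_prod_roots hbl0 k P₁.eval
  have hprod₂ := hs₁.coeff_zero_zpow_neg_mul_leadingCoeff_zpow_mul_prod_roots hak0 l P₂.eval
  have hres := leadingCoeff_pow_mul_prod_roots_eval_comm hs₁ hs₂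
  have hsign : (-1 : ℂ) ^ (k * P₂.natDegree) * (-1) ^ (P₁.natDegree * P₂.natDegree) =
      (-1) ^ (k * l + n * m) * (-1) ^ (l * P₁.natDegree) := by
    rw [← zpow_natCast, Nat.cast_mul, ← zpow_add₀ (by norm_num), ← zpow_add₀ (by norm_num)]
    exact neg_one_zpow_eq_of_even_sub ⟨-(n * l), by rw [hd₁', hd₂']; ring⟩
  have hbm_pow : P₂.leadingCoeff ^ n = P₂.leadingCoeff ^ P₁.natDegree * P₂.leadingCoeff ^ k := by
    rw [← zpow_natCast, ← zpow_add₀ hbm0, hd₁', sub_add_cancel]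
  have han_pow : P₁.leadingCoeff ^ m = P₁.leadingCoeff ^ P₂.natDegree * P₁.leadingCoeff ^ l := by
    rw [← zpow_natCast, ← zpow_add₀ han0, hd₂', sub_add_cancel]
  rw [hbm_pow, han_pow]
  linear_combination P₂.leadingCoeff ^ P₁.natDegree * hprod₁ + (-1) ^ (k * P₂.natDegree) * hres
    - (-1) ^ (k * l + n * m) * P₁.leadingCoeff ^ P₂.natDegree * hprod₂
    + P₁.leadingCoeff ^ P₂.natDegree * (P₁.roots.map P₂.eval).prod * hsign
end

section
/- Weil reciprocity law for the projective line: let f and g be two nonzero rational functions in ℂ(X). Then the Weil symbol {f,g}_p equals 1 for all but finitely many p ∈ ℂ ∪ {∞} (indeed whenever ord_p f = ord_p g = 0), and the product of {f,g}_p over all p ∈ ℂ ∪ {∞} (equivalently, over any finite set containing all zeros and poles of f and of g together with ∞) equals 1. -/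
/-!
Both sides of the reciprocity law are bimultiplicative in `(f, g)`: the order and the leading
coefficient at a point are multiplicative, and the sign `(-1)^{mn}` is bilinear in the orders.
The symbol is moreover antisymmetric, `{g, f}_p = {f, g}_p⁻¹`. Over `ℂ`, a nonzero rational
function whose zeros and poles lie in `S` belongs to the subgroup of `ℂ(X)ˣ` generated by the
nonzero constants and the `X - a` with `a ∈ S`, so it suffices to check that the product of the
symbols over `S ∪ {∞}` is `1` on pairs of generators. There it is a direct computation; for
instance, for `X - a` and `X - b` with `a ≠ b` the symbols at `a`, `b`, `∞` are `a - b`,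
`(b - a)⁻¹` and `-1`.
-/

open Polynomial

/-- The order `ord_p f ∈ ℤ` of a rational function `f` at a finite point `p ∈ ℂ`. -/
noncomputable def ordAt (f : RatFunc ℂ) (p : ℂ) : ℤ :=
  (f.num.rootMultiplicity p : ℤ) - (f.denom.rootMultiplicity p : ℤ)

/-- The leading Laurent coefficient `lc_p f ∈ ℂ*` of a rational function `f` at a finite
point `p ∈ ℂ`: the value at `p` of `(X - p)^{-ord_p f} · f`. -/
noncomputable def lcAt (f : RatFunc ℂ) (p : ℂ) : ℂ :=
  (f.num /ₘ (X - C p) ^ f.num.rootMultiplicity p).eval p /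
    (f.denom /ₘ (X - C p) ^ f.denom.rootMultiplicity p).eval p

/-- The order of a rational function at `∞`: `ord_∞ f = deg denom - deg num = -intDegree f`
(the order in the local parameter `w = 1/z`). -/
noncomputable def ordInf (f : RatFunc ℂ) : ℤ :=
  (f.denom.natDegree : ℤ) - (f.num.natDegree : ℤ)

/-- The leading Laurent coefficient of a rational function at `∞` (in the local parameter
`w = 1/z`): the ratio of the leading coefficients of numerator and denominator. -/
noncomputable def lcInf (f : RatFunc ℂ) : ℂ :=
  f.num.leadingCoeff / f.denom.leadingCoeff

/-- The Weil symbol `{f, g}_p` at a finite point `p ∈ ℂ`. -/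
noncomputable def weilSymbolAt (f g : RatFunc ℂ) (p : ℂ) : ℂ :=
  (-1 : ℂ) ^ (ordAt f p * ordAt g p) * lcAt f p ^ (-(ordAt g p)) * lcAt g p ^ ordAt f p

/-- The Weil symbol `{f, g}_∞` at infinity. -/
noncomputable def weilSymbolInf (f g : RatFunc ℂ) : ℂ :=
  (-1 : ℂ) ^ (ordInf f * ordInf g) * lcInf f ^ (-(ordInf g)) * lcInf g ^ ordInf f

namespace WeilReciprocity

local notation "ι" => algebraMap ℂ[X] (RatFunc ℂ)

section TameSymbol

variable {K : Type*} [Field K]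

def tameSymbol (m : ℤ) (a : K) (n : ℤ) (b : K) : K :=
  (-1) ^ (m * n) * a ^ (-n) * b ^ m

theorem tameSymbol_zero_zero (a b : K) : tameSymbol 0 a 0 b = 1 := by
  simp [tameSymbol]

theorem tameSymbol_mul_right (m : ℤ) {a : K} (ha : a ≠ 0) (n₁ n₂ : ℤ) (b₁ b₂ : K) :
    tameSymbol m a (n₁ + n₂) (b₁ * b₂) = tameSymbol m a n₁ b₁ * tameSymbol m a n₂ b₂ := by
  simp only [tameSymbol]
  rw [mul_add, zpow_add₀ (neg_ne_zero.mpr one_ne_zero), neg_add, zpow_add₀ ha, mul_zpow]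
  ring

theorem tameSymbol_swap (m : ℤ) (a : K) (n : ℤ) (b : K) :
    tameSymbol n b m a = (tameSymbol m a n b)⁻¹ := by
  have hsign : ((-1 : K) ^ (m * n))⁻¹ = (-1) ^ (m * n) := by
    rw [← inv_zpow, inv_neg, inv_one]
  simp only [tameSymbol, mul_inv, hsign, ← zpow_neg, neg_neg, mul_comm n m]
  ring

end TameSymbol

section LeadingCoeffAt

variable {R : Type*} [CommRing R]

/-- The leading coefficient of the Taylor expansion of `q` at `p`. -/
noncomputable def leadingCoeffAt (q : R[X]) (p : R) : R :=
  (q /ₘ (X - C p) ^ q.rootMultiplicity p).eval p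

theorem leadingCoeffAt_ne_zero {q : R[X]} (hq : q ≠ 0) (p : R) : leadingCoeffAt q p ≠ 0 :=
  eval_divByMonic_pow_rootMultiplicity_ne_zero p hq

theorem leadingCoeffAt_of_not_isRoot {q : R[X]} {p : R} (h : ¬q.IsRoot p) :
    leadingCoeffAt q p = q.eval p := by
  rw [leadingCoeffAt, rootMultiplicity_eq_zero h, pow_zero, divByMonic_one]

theorem leadingCoeffAt_X_sub_C_self [Nontrivial R] (p : R) : leadingCoeffAt (X - C p) p = 1 := by
  have h := mul_divByMonic_cancel_left (1 : R[X]) (monic_X_sub_C p)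
  rw [mul_one] at h
  rw [leadingCoeffAt, rootMultiplicity_X_sub_C_self, pow_one, h, eval_one]

theorem leadingCoeffAt_mul [IsDomain R] {q r : R[X]} (hq : q ≠ 0) (hr : r ≠ 0) (p : R) :
    leadingCoeffAt (q * r) p = leadingCoeffAt q p * leadingCoeffAt r p := by
  have hqr : q * r = (X - C p) ^ (q.rootMultiplicity p + r.rootMultiplicity p) *
      ((q /ₘ (X - C p) ^ q.rootMultiplicity p) * (r /ₘ (X - C p) ^ r.rootMultiplicity p)) := by
    conv_lhs => rw [← pow_mul_divByMonic_rootMultiplicity_eq q p,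
      ← pow_mul_divByMonic_rootMultiplicity_eq r p]
    ring
  rw [leadingCoeffAt, rootMultiplicity_mul (mul_ne_zero hq hr), hqr,
    mul_divByMonic_cancel_left _ ((monic_X_sub_C p).pow _), eval_mul]
  rfl

end LeadingCoeffAt

section RatFunc

variable {f g : RatFunc ℂ}

theorem lcAt_eq_div (f : RatFunc ℂ) (p : ℂ) :
    lcAt f p = leadingCoeffAt f.num p / leadingCoeffAt f.denom p :=
  rfl

theorem lcAt_ne_zero (hf : f ≠ 0) (p : ℂ) : lcAt f p ≠ 0 :=
  div_ne_zero (leadingCoeffAt_ne_zero (RatFunc.num_ne_zero hf) p)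
    (leadingCoeffAt_ne_zero (RatFunc.denom_ne_zero f) p)

theorem lcInf_ne_zero (hf : f ≠ 0) : lcInf f ≠ 0 :=
  div_ne_zero (leadingCoeff_ne_zero.mpr (RatFunc.num_ne_zero hf))
    (leadingCoeff_ne_zero.mpr (RatFunc.denom_ne_zero f))

theorem ordAt_mul (hf : f ≠ 0) (hg : g ≠ 0) (p : ℂ) :
    ordAt (f * g) p = ordAt f p + ordAt g p := by
  have key := congrArg (rootMultiplicity p) (RatFunc.num_denom_mul f g)
  have hfg := mul_ne_zero hf hg
  simp only [rootMultiplicity_mul, ne_eq, mul_eq_zero, RatFunc.num_eq_zero_iff, hf, hg, hfg,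
    RatFunc.denom_ne_zero, or_self, not_false_eq_true] at key
  simp only [ordAt]
  omega

theorem lcAt_mul (hf : f ≠ 0) (hg : g ≠ 0) (p : ℂ) :
    lcAt (f * g) p = lcAt f p * lcAt g p := by
  have key := congrArg (leadingCoeffAt · p) (RatFunc.num_denom_mul f g)
  have hfg := mul_ne_zero hf hg
  simp only [leadingCoeffAt_mul, ne_eq, mul_eq_zero, RatFunc.num_eq_zero_iff, hf, hg, hfg,
    RatFunc.denom_ne_zero, or_self, not_false_eq_true] at key
  have hf' := leadingCoeffAt_ne_zero (RatFunc.denom_ne_zero f) p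
  have hg' := leadingCoeffAt_ne_zero (RatFunc.denom_ne_zero g) p
  have hfg' := leadingCoeffAt_ne_zero (RatFunc.denom_ne_zero (f * g)) p
  simp only [lcAt_eq_div]
  field_simp
  linear_combination key

theorem ordInf_mul (hf : f ≠ 0) (hg : g ≠ 0) : ordInf (f * g) = ordInf f + ordInf g := by
  have key := congrArg natDegree (RatFunc.num_denom_mul f g)
  have hfg := mul_ne_zero hf hg
  simp only [natDegree_mul', leadingCoeff_mul, ne_eq, mul_eq_zero, leadingCoeff_eq_zero,
    RatFunc.num_eq_zero_iff, hf, hg, hfg, RatFunc.denom_ne_zero, or_self,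
    not_false_eq_true] at key
  simp only [ordInf]
  omega

theorem lcInf_mul (f g : RatFunc ℂ) : lcInf (f * g) = lcInf f * lcInf g := by
  have key := congrArg leadingCoeff (RatFunc.num_denom_mul f g)
  simp only [leadingCoeff_mul] at key
  have hf := leadingCoeff_ne_zero.mpr (RatFunc.denom_ne_zero f)
  have hg := leadingCoeff_ne_zero.mpr (RatFunc.denom_ne_zero g)
  have hfg := leadingCoeff_ne_zero.mpr (RatFunc.denom_ne_zero (f * g))
  simp only [lcInf]
  field_simp
  linear_combination key

theorem ordAt_algebraMap (q : ℂ[X]) (p : ℂ) : ordAt (ι q) p = q.rootMultiplicity p := by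
  simp [ordAt]

theorem lcAt_algebraMap (q : ℂ[X]) (p : ℂ) : lcAt (ι q) p = leadingCoeffAt q p := by
  rw [lcAt_eq_div, RatFunc.num_algebraMap, RatFunc.denom_algebraMap,
    leadingCoeffAt_of_not_isRoot (q := 1) (by simp), eval_one, div_one]

theorem ordInf_algebraMap (q : ℂ[X]) : ordInf (ι q) = -q.natDegree := by
  simp [ordInf]

theorem lcInf_algebraMap (q : ℂ[X]) : lcInf (ι q) = q.leadingCoeff := by
  simp [lcInf]

theorem ordAt_ne_zero_of_isRoot (hf : f ≠ 0) {p : ℂ} (h : f.num.IsRoot p ∨ f.denom.IsRoot p) :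
    ordAt f p ≠ 0 := by
  have hcop : ¬(f.num.IsRoot p ∧ f.denom.IsRoot p) := fun ⟨hn, hd⟩ =>
    not_isUnit_X_sub_C p <| (RatFunc.isCoprime_num_denom f).isUnit_of_dvd'
      (dvd_iff_isRoot.mpr hn) (dvd_iff_isRoot.mpr hd)
  rw [ordAt, sub_ne_zero, Nat.cast_injective.ne_iff]
  rcases h with hn | hd
  · rw [rootMultiplicity_eq_zero fun hd => hcop ⟨hn, hd⟩]
    exact ((rootMultiplicity_pos (RatFunc.num_ne_zero hf)).mpr hn).ne'
  · rw [rootMultiplicity_eq_zero fun hn => hcop ⟨hn, hd⟩]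
    exact ((rootMultiplicity_pos (RatFunc.denom_ne_zero f)).mpr hd).ne

end RatFunc

section Symbol

variable {f g g' : RatFunc ℂ}

theorem weilSymbolAt_eq_tameSymbol (f g : RatFunc ℂ) (p : ℂ) :
    weilSymbolAt f g p = tameSymbol (ordAt f p) (lcAt f p) (ordAt g p) (lcAt g p) :=
  rfl

theorem weilSymbolInf_eq_tameSymbol (f g : RatFunc ℂ) :
    weilSymbolInf f g = tameSymbol (ordInf f) (lcInf f) (ordInf g) (lcInf g) :=
  rfl

theorem weilSymbolAt_mul_right (hf : f ≠ 0) (hg : g ≠ 0) (hg' : g' ≠ 0) (p : ℂ) :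
    weilSymbolAt f (g * g') p = weilSymbolAt f g p * weilSymbolAt f g' p := by
  simp only [weilSymbolAt_eq_tameSymbol, ordAt_mul hg hg', lcAt_mul hg hg']
  exact tameSymbol_mul_right _ (lcAt_ne_zero hf p) _ _ _ _

theorem weilSymbolInf_mul_right (hf : f ≠ 0) (hg : g ≠ 0) (hg' : g' ≠ 0) :
    weilSymbolInf f (g * g') = weilSymbolInf f g * weilSymbolInf f g' := by
  simp only [weilSymbolInf_eq_tameSymbol, ordInf_mul hg hg', lcInf_mul]
  exact tameSymbol_mul_right _ (lcInf_ne_zero hf) _ _ _ _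

theorem weilSymbolAt_swap (f g : RatFunc ℂ) (p : ℂ) :
    weilSymbolAt g f p = (weilSymbolAt f g p)⁻¹ :=
  tameSymbol_swap _ _ _ _

theorem weilSymbolInf_swap (f g : RatFunc ℂ) : weilSymbolInf g f = (weilSymbolInf f g)⁻¹ :=
  tameSymbol_swap _ _ _ _

noncomputable def totalSymbol (S : Finset ℂ) (f g : RatFunc ℂ) : ℂ :=
  (∏ p ∈ S, weilSymbolAt f g p) * weilSymbolInf f g

theorem totalSymbol_swap (S : Finset ℂ) (f g : RatFunc ℂ) :
    totalSymbol S g f = (totalSymbol S f g)⁻¹ := by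
  simp only [totalSymbol, weilSymbolAt_swap f g, weilSymbolInf_swap f g, Finset.prod_inv_distrib,
    mul_inv]

theorem totalSymbol_one_right (S : Finset ℂ) (f : RatFunc ℂ) : totalSymbol S f 1 = 1 := by
  simp [totalSymbol, weilSymbolAt, weilSymbolInf, ordAt, ordInf, lcAt_eq_div, lcInf,
    leadingCoeffAt_ne_zero]

theorem totalSymbol_mul_right (S : Finset ℂ) (hf : f ≠ 0) (hg : g ≠ 0) (hg' : g' ≠ 0) :
    totalSymbol S f (g * g') = totalSymbol S f g * totalSymbol S f g' := by
  simp only [totalSymbol, weilSymbolAt_mul_right hf hg hg', weilSymbolInf_mul_right hf hg hg',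
    Finset.prod_mul_distrib]
  ring

noncomputable def totalSymbolHom (S : Finset ℂ) (u : (RatFunc ℂ)ˣ) : (RatFunc ℂ)ˣ →* ℂ where
  toFun v := totalSymbol S u v
  map_one' := totalSymbol_one_right S u
  map_mul' v w := totalSymbol_mul_right S u.ne_zero v.ne_zero w.ne_zero

theorem totalSymbol_algebraMap (S : Finset ℂ) (q r : ℂ[X]) :
    totalSymbol S (ι q) (ι r) =
      (∏ p ∈ S, tameSymbol (q.rootMultiplicity p) (leadingCoeffAt q p)
        (r.rootMultiplicity p) (leadingCoeffAt r p)) *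
      tameSymbol (-q.natDegree) q.leadingCoeff (-r.natDegree) r.leadingCoeff := by
  simp only [totalSymbol, weilSymbolAt_eq_tameSymbol, weilSymbolInf_eq_tameSymbol,
    ordAt_algebraMap, lcAt_algebraMap, ordInf_algebraMap, lcInf_algebraMap]

end Symbol

section Generators

variable {S : Finset ℂ}

theorem totalSymbol_C_C (c d : ℂ) : totalSymbol S (ι (C c)) (ι (C d)) = 1 := by
  rw [totalSymbol_algebraMap]
  simp [tameSymbol_zero_zero]

theorem totalSymbol_C_X_sub_C {c b : ℂ} (hc : c ≠ 0) (hb : b ∈ S) :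
    totalSymbol S (ι (C c)) (ι (X - C b)) = 1 := by
  rw [totalSymbol_algebraMap, Finset.prod_eq_single_of_mem b hb fun p _ hpb => by
    simp [rootMultiplicity_X_sub_C, hpb, tameSymbol_zero_zero]]
  simp [rootMultiplicity_X_sub_C, leadingCoeffAt_X_sub_C_self, leadingCoeffAt_of_not_isRoot, hc,
    tameSymbol]

theorem totalSymbol_X_sub_C_self {a : ℂ} (ha : a ∈ S) :
    totalSymbol S (ι (X - C a)) (ι (X - C a)) = 1 := by
  rw [totalSymbol_algebraMap, Finset.prod_eq_single_of_mem a ha fun p _ hpa => by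
    simp [rootMultiplicity_X_sub_C, hpa, tameSymbol_zero_zero]]
  simp [rootMultiplicity_X_sub_C_self, leadingCoeffAt_X_sub_C_self, tameSymbol]

theorem totalSymbol_X_sub_C_X_sub_C {a b : ℂ} (hab : a ≠ b) (ha : a ∈ S) (hb : b ∈ S) :
    totalSymbol S (ι (X - C a)) (ι (X - C b)) = 1 := by
  rw [totalSymbol_algebraMap, ← Finset.prod_subset (Finset.insert_subset ha
    (Finset.singleton_subset_iff.mpr hb)) fun p _ hp => by
      simp_all [rootMultiplicity_X_sub_C, tameSymbol_zero_zero], Finset.prod_pair hab]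
  have hab' : a - b ≠ 0 := sub_ne_zero.mpr hab
  have hba : b - a ≠ 0 := sub_ne_zero.mpr hab.symm
  have hA : leadingCoeffAt (X - C b) a = a - b := by
    simp [leadingCoeffAt_of_not_isRoot, hab']
  have hB : leadingCoeffAt (X - C a) b = b - a := by
    simp [leadingCoeffAt_of_not_isRoot, hba]
  simp only [tameSymbol, rootMultiplicity_X_sub_C_self, rootMultiplicity_X_sub_C, if_neg hab,
    if_neg hab.symm, natDegree_X_sub_C, leadingCoeff_X_sub_C, leadingCoeffAt_X_sub_C_self, hA, hB]
  norm_num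
  field_simp
  ring

def generators (S : Finset ℂ) : Set (RatFunc ℂ)ˣ :=
  {u | ∃ c : ℂ, (u : RatFunc ℂ) = ι (C c)} ∪ {u | ∃ a ∈ S, (u : RatFunc ℂ) = ι (X - C a)}

theorem totalSymbol_generators {u v : (RatFunc ℂ)ˣ} (hu : u ∈ generators S)
    (hv : v ∈ generators S) : totalSymbol S u v = 1 := by
  have hC : ∀ {c : ℂ} {w : (RatFunc ℂ)ˣ}, (w : RatFunc ℂ) = ι (C c) → c ≠ 0 := by
    rintro c w hw rfl
    simp at hw
  rcases hu with ⟨c, hu⟩ | ⟨a, ha, hu⟩ <;> rcases hv with ⟨d, hv⟩ | ⟨b, hb, hv⟩ <;> rw [hu, hv]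
  · exact totalSymbol_C_C c d
  · exact totalSymbol_C_X_sub_C (hC hu) hb
  · rw [totalSymbol_swap, totalSymbol_C_X_sub_C (hC hv) ha, inv_one]
  · obtain rfl | hab := eq_or_ne a b
    · exact totalSymbol_X_sub_C_self ha
    · exact totalSymbol_X_sub_C_X_sub_C hab ha hb

theorem totalSymbol_eq_one_of_mem_closure {u v : (RatFunc ℂ)ˣ}
    (hu : u ∈ Subgroup.closure (generators S)) (hv : v ∈ Subgroup.closure (generators S)) :
    totalSymbol S u v = 1 := by
  have of_generators : ∀ u : (RatFunc ℂ)ˣ, (∀ w ∈ generators S, totalSymbol S u w = 1) →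
      ∀ v ∈ Subgroup.closure (generators S), totalSymbol S u v = 1 :=
    fun u h v hv => (Subgroup.closure_le (totalSymbolHom S u).ker).mpr h hv
  -- antisymmetry turns multiplicativity in the second argument into multiplicativity in the first
  refine of_generators u (fun w hw => ?_) v hv
  rw [totalSymbol_swap, of_generators w (fun w' hw' => totalSymbol_generators hw hw') u hu,
    inv_one]

theorem exists_mem_closure_generators {f : RatFunc ℂ} (hf : f ≠ 0)
    (hS : ∀ p, f.num.IsRoot p ∨ f.denom.IsRoot p → p ∈ S) :
    ∃ u ∈ Subgroup.closure (generators S), (u : RatFunc ℂ) = f := by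
  have hpoly : ∀ q : ℂ[X], q ≠ 0 → (∀ p, q.IsRoot p → p ∈ S) →
      ι q ∈ (Subgroup.closure (generators S)).toSubmonoid.map (Units.coeHom (RatFunc ℂ)) := by
    intro q hq hqS
    rw [Splits.eq_prod_roots (IsAlgClosed.splits q), map_mul, map_multiset_prod, Multiset.map_map]
    refine mul_mem ?_ (multiset_prod_mem _ fun x hx => ?_)
    · refine ⟨Units.mk0 _ ?_, Subgroup.subset_closure (Or.inl ⟨_, rfl⟩), rfl⟩
      simpa using hq
    · obtain ⟨a, ha, rfl⟩ := Multiset.mem_map.mp hx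
      exact ⟨Units.mk0 _ (RatFunc.algebraMap_ne_zero (X_sub_C_ne_zero a)),
        Subgroup.subset_closure (Or.inr ⟨a, hqS a ((mem_roots hq).mp ha), rfl⟩), rfl⟩
  obtain ⟨u, hu, hnum⟩ := hpoly _ (RatFunc.num_ne_zero hf) fun p hp => hS p (Or.inl hp)
  obtain ⟨v, hv, hdenom⟩ := hpoly _ (RatFunc.denom_ne_zero f) fun p hp => hS p (Or.inr hp)
  refine ⟨u * v⁻¹, mul_mem hu (inv_mem hv), ?_⟩
  rw [Units.val_mul, Units.val_inv_eq_inv_val, ← div_eq_mul_inv]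
  exact (congrArg₂ (· / ·) hnum hdenom).trans (RatFunc.num_div_denom f)

theorem totalSymbol_eq_one {f g : RatFunc ℂ} (hf : f ≠ 0) (hg : g ≠ 0)
    (hfS : ∀ p, f.num.IsRoot p ∨ f.denom.IsRoot p → p ∈ S)
    (hgS : ∀ p, g.num.IsRoot p ∨ g.denom.IsRoot p → p ∈ S) : totalSymbol S f g = 1 := by
  obtain ⟨u, hu, rfl⟩ := exists_mem_closure_generators hf hfS
  obtain ⟨v, hv, rfl⟩ := exists_mem_closure_generators hg hgS
  exact totalSymbol_eq_one_of_mem_closure hu hv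

end Generators

end WeilReciprocity

/-- **Weil reciprocity for `ℂP¹`.** For nonzero rational functions
`f, g ∈ ℂ(X)`: the Weil symbol `{f, g}_p` equals `1` whenever `ord_p f = ord_p g = 0`
(hence for all but finitely many `p`), and for every finite set `S ⊆ ℂ` containing all the
zeros and poles of `f` and of `g`, the product of the symbols over `S ∪ {∞}` equals `1`. -/
theorem stmt2 (f g : RatFunc ℂ) (hf : f ≠ 0) (hg : g ≠ 0) :
    (∀ p : ℂ, ordAt f p = 0 → ordAt g p = 0 → weilSymbolAt f g p = 1) ∧
    ∀ S : Finset ℂ, (∀ p : ℂ, (ordAt f p ≠ 0 ∨ ordAt g p ≠ 0) → p ∈ S) →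
      (∏ p ∈ S, weilSymbolAt f g p) * weilSymbolInf f g = 1 := by
  refine ⟨fun p hfp hgp => ?_, fun S hS => ?_⟩
  · rw [WeilReciprocity.weilSymbolAt_eq_tameSymbol, hfp, hgp,
      WeilReciprocity.tameSymbol_zero_zero]
  · exact WeilReciprocity.totalSymbol_eq_one hf hg
      (fun p hp => hS p (Or.inl (WeilReciprocity.ordAt_ne_zero_of_isRoot hf hp)))
      (fun p hp => hS p (Or.inr (WeilReciprocity.ordAt_ne_zero_of_isRoot hg hp)))
end

section
/- Let f and P be Laurent polynomials: f = X^s F and P = X^k Q as rational functions in ℂ(X), where s, k ∈ ℤ, F, Q ∈ ℂ[X], Q ≠ 0 and Q(0) ≠ 0. Let g := f·P′/P ∈ ℂ(X), where P′ is the derivative of P. Then the sum Σ f(z)·μ(z), taken over all roots z ∈ ℂ* of P (i.e. over the multiset of roots of Q, μ(z) being the multiplicity), equals −(res₀ ω + res_∞ ω), where: res₀ ω is the coefficient of X^{−1} in the Laurent series expansion of g at 0 (the image of g under the canonical embedding of ℂ(X) into formal Laurent series), and res_∞ ω := −(the coefficient of X^{−1} in the Laurent series expansion at 0 of X^{−2}·ĝ),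 where ĝ is the image of g under the ℂ-algebra field endomorphism of ℂ(X) sending X to X^{−1}. -/
open Polynomial
open scoped LaurentSeries

/-!
The functional `res₀ + res_∞` is `K`-linear. It kills every monomial `X ^ n`, `n : ℤ` (both
residues of `X ^ n dz` vanish unless `n = -1`, where they are `1` and `-1`), and takes the value
`-1` on `(X - c)⁻¹` for `c ≠ 0` (residue `0` at `0` and `-1` at `∞`). Since
`P'/P = k X⁻¹ + ∑_z (X - z)⁻¹` over the roots `z` of `Q`, and `f (X - z)⁻¹` differs from
`f(z) (X - z)⁻¹` by a Laurent polynomial, linearity gives `res₀ ω + res_∞ ω = -∑_z f(z)`.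
-/

noncomputable section

variable {K : Type*} [Field K]

def RatFunc.derivative (P : RatFunc K) : RatFunc K :=
  algebraMap K[X] (RatFunc K)
      (Polynomial.derivative P.num * P.denom - P.num * Polynomial.derivative P.denom) /
    algebraMap K[X] (RatFunc K) (P.denom ^ 2)

lemma RatFunc.derivative_algebraMap_div (A : K[X]) {B : K[X]} (hB : B ≠ 0) :
    (algebraMap K[X] (RatFunc K) A / algebraMap K[X] (RatFunc K) B).derivative =
      algebraMap K[X] (RatFunc K) (Polynomial.derivative A * B - A * Polynomial.derivative B) /
        algebraMap K[X] (RatFunc K) (B ^ 2) := by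
  set P := algebraMap K[X] (RatFunc K) A / algebraMap K[X] (RatFunc K) B with hP
  have hD : P.denom ≠ 0 := P.denom_ne_zero
  have hcross : A * P.denom = P.num * B := by
    apply RatFunc.algebraMap_injective K
    have := P.num_div_denom
    rw [hP, div_eq_div_iff (RatFunc.algebraMap_ne_zero hD) (RatFunc.algebraMap_ne_zero hB)] at this
    rw [map_mul, map_mul]
    exact this.symm
  have hcross' := congrArg Polynomial.derivative hcross
  rw [derivative_mul, derivative_mul] at hcross'
  rw [RatFunc.derivative, div_eq_div_iff (RatFunc.algebraMap_ne_zero (pow_ne_zero 2 hD))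
    (RatFunc.algebraMap_ne_zero (pow_ne_zero 2 hB)), ← map_mul, ← map_mul]
  congr 1
  linear_combination (-(B * P.denom)) * hcross' +
    (Polynomial.derivative B * P.denom + B * Polynomial.derivative P.denom) * hcross

lemma RatFunc.derivative_algebraMap_div_div_self {A B : K[X]} (hA : A ≠ 0) (hB : B ≠ 0) :
    (algebraMap K[X] (RatFunc K) A / algebraMap K[X] (RatFunc K) B).derivative /
        (algebraMap K[X] (RatFunc K) A / algebraMap K[X] (RatFunc K) B) =
      algebraMap K[X] (RatFunc K) (Polynomial.derivative A) / algebraMap K[X] (RatFunc K) A -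
        algebraMap K[X] (RatFunc K) (Polynomial.derivative B) / algebraMap K[X] (RatFunc K) B := by
  have hA' := RatFunc.algebraMap_ne_zero hA
  have hB' := RatFunc.algebraMap_ne_zero hB
  rw [RatFunc.derivative_algebraMap_div A hB, map_sub, map_mul, map_mul, map_pow]
  field_simp

lemma algebraMap_derivative_mul_div_self {p q : K[X]} (hp : p ≠ 0) (hq : q ≠ 0) :
    algebraMap K[X] (RatFunc K) (derivative (p * q)) / algebraMap K[X] (RatFunc K) (p * q) =
      algebraMap K[X] (RatFunc K) (derivative p) / algebraMap K[X] (RatFunc K) p +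
        algebraMap K[X] (RatFunc K) (derivative q) / algebraMap K[X] (RatFunc K) q := by
  have hp' := RatFunc.algebraMap_ne_zero hp
  have hq' := RatFunc.algebraMap_ne_zero hq
  rw [derivative_mul, map_add, map_mul, map_mul, map_mul]
  field_simp

lemma algebraMap_derivative_X_pow_div_self (n : ℕ) :
    algebraMap K[X] (RatFunc K) (derivative (X ^ n)) / algebraMap K[X] (RatFunc K) (X ^ n) =
      (n : RatFunc K) * RatFunc.X⁻¹ := by
  have hX : (RatFunc.X : RatFunc K) ≠ 0 := RatFunc.X_ne_zero
  cases n with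
  | zero => simp
  | succ n =>
    rw [derivative_X_pow]
    simp only [map_mul, map_pow, RatFunc.algebraMap_X, map_natCast,
      Nat.add_sub_cancel]
    field_simp
    ring

lemma algebraMap_derivative_div_self_of_splits {Q : K[X]} (hQ : Q.Splits) (hQ0 : Q ≠ 0) :
    algebraMap K[X] (RatFunc K) (derivative Q) / algebraMap K[X] (RatFunc K) Q =
      (Q.roots.map fun z ↦ (RatFunc.X - RatFunc.C z)⁻¹).sum := by
  have key := (hQ.map (algebraMap K (RatFunc K))).eval_derivative_div_eval_of_ne_zero
    (x := RatFunc.X) ?_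
  · rw [derivative_map, eval_map_algebraMap, eval_map_algebraMap,
      RatFunc.aeval_X_left_eq_algebraMap, RatFunc.aeval_X_left_eq_algebraMap, hQ.roots_map] at key
    simpa [RatFunc.algebraMap_eq_C] using key
  · rw [eval_map_algebraMap, RatFunc.aeval_X_left_eq_algebraMap]
    exact RatFunc.algebraMap_ne_zero hQ0

lemma RatFunc.derivative_X_zpow_mul_div_self (k : ℤ) {Q : K[X]} (hQ : Q ≠ 0) :
    (X ^ k * algebraMap K[X] (RatFunc K) Q).derivative / (X ^ k * algebraMap K[X] (RatFunc K) Q) =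
      (k : RatFunc K) * X⁻¹ +
        algebraMap K[X] (RatFunc K) (Polynomial.derivative Q) / algebraMap K[X] (RatFunc K) Q := by
  obtain ⟨a, b, rfl⟩ : ∃ a b : ℕ, k = a - b := ⟨k.toNat, (-k).toNat, by omega⟩
  have hX : (X : RatFunc K) ≠ 0 := X_ne_zero
  have hP : X ^ ((a : ℤ) - b) * algebraMap K[X] (RatFunc K) Q =
      algebraMap K[X] (RatFunc K) (Polynomial.X ^ a * Q) /
        algebraMap K[X] (RatFunc K) (Polynomial.X ^ b) := by
    rw [zpow_sub₀ hX, zpow_natCast, zpow_natCast, map_mul, map_pow, map_pow, algebraMap_X]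
    ring
  have hXa : (Polynomial.X ^ a : K[X]) ≠ 0 := pow_ne_zero _ Polynomial.X_ne_zero
  rw [hP, derivative_algebraMap_div_div_self (mul_ne_zero hXa hQ)
    (pow_ne_zero _ Polynomial.X_ne_zero), algebraMap_derivative_mul_div_self hXa hQ,
    algebraMap_derivative_X_pow_div_self, algebraMap_derivative_X_pow_div_self]
  push_cast
  ring

lemma RatFunc.coe_C (c : K) : ((RatFunc.C c : RatFunc K) : K⸨X⸩) = HahnSeries.C c := by
  rw [← RatFunc.algebraMap_C, ← IsScalarTower.algebraMap_apply,
    Polynomial.algebraMap_hahnSeries_apply, Polynomial.coe_C, HahnSeries.ofPowerSeries_C]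

lemma RatFunc.coe_X_zpow (n : ℤ) :
    ((RatFunc.X ^ n : RatFunc K) : K⸨X⸩) = HahnSeries.single n 1 := by
  rw [map_zpow₀, RatFunc.coe_X, ← RatFunc.single_zpow]

lemma RatFunc.coe_inv_algebraMap {q : K[X]} (hq : q.coeff 0 ≠ 0) :
    (((algebraMap K[X] (RatFunc K) q)⁻¹ : RatFunc K) : K⸨X⸩) =
      HahnSeries.ofPowerSeries ℤ K (q : PowerSeries K)⁻¹ := by
  have hq' : PowerSeries.constantCoeff (q : PowerSeries K) ≠ 0 := by
    rwa [← PowerSeries.coeff_zero_eq_constantCoeff_apply, Polynomial.coeff_coe]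
  rw [map_inv₀, ← IsScalarTower.algebraMap_apply, Polynomial.algebraMap_hahnSeries_apply]
  refine inv_eq_of_mul_eq_one_right ?_
  rw [← map_mul, PowerSeries.mul_inv_cancel _ hq', map_one]

def resZero : RatFunc K →ₗ[K] K where
  toFun h := (h : K⸨X⸩).coeff (-1)
  map_add' _ _ := by simp
  map_smul' c h := by
    rw [RatFunc.smul_eq_C_mul, map_mul, RatFunc.coe_C, HahnSeries.C_mul_eq_smul]
    rfl

-- The residue at `∞` of `h dz`: substituting `z = w⁻¹`, `dz = -w⁻² dw`.
def resInfty (σ : RatFunc K →ₐ[K] RatFunc K) : RatFunc K →ₗ[K] K :=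
  -(resZero ∘ₗ LinearMap.mulLeft K (RatFunc.X ^ (-2 : ℤ)) ∘ₗ σ.toLinearMap)

def resZeroAddResInfty (σ : RatFunc K →ₐ[K] RatFunc K) : RatFunc K →ₗ[K] K :=
  resZero + resInfty σ

lemma resZero_apply (h : RatFunc K) : resZero h = (h : K⸨X⸩).coeff (-1) := rfl

lemma resInfty_apply (σ : RatFunc K →ₐ[K] RatFunc K) (h : RatFunc K) :
    resInfty σ h = -resZero (RatFunc.X ^ (-2 : ℤ) * σ h) := rfl

lemma resZero_X_zpow (n : ℤ) : resZero (RatFunc.X ^ n : RatFunc K) = if n = -1 then 1 else 0 := by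
  simp only [resZero_apply, RatFunc.coe_X_zpow, HahnSeries.coeff_single, eq_comm]

lemma resZero_inv_algebraMap {q : K[X]} (hq : q.coeff 0 ≠ 0) :
    resZero (algebraMap K[X] (RatFunc K) q)⁻¹ = 0 := by
  rw [resZero_apply, RatFunc.coe_inv_algebraMap hq, PowerSeries.coeff_coe]
  simp

lemma resZero_X_zpow_neg_one_mul_inv_algebraMap {q : K[X]} (hq : q.coeff 0 ≠ 0) :
    resZero (RatFunc.X ^ (-1 : ℤ) * (algebraMap K[X] (RatFunc K) q)⁻¹) = (q.coeff 0)⁻¹ := by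
  rw [resZero_apply, map_mul, RatFunc.coe_X_zpow, RatFunc.coe_inv_algebraMap hq,
    HahnSeries.coeff_single_mul, one_mul, sub_self, PowerSeries.coeff_coe]
  simp

lemma exists_X_zpow_mul_algebraMap_eq (s : ℤ) (F : K[X]) {c : K} (hc : c ≠ 0) :
    ∃ (n : ℤ) (H : K[X]), RatFunc.X ^ s * algebraMap K[X] (RatFunc K) F =
      RatFunc.X ^ n * algebraMap K[X] (RatFunc K) H * (RatFunc.X - RatFunc.C c) +
        RatFunc.C (c ^ s * F.eval c) := by
  obtain ⟨a, b, rfl⟩ : ∃ a b : ℕ, s = a - b := ⟨s.toNat, (-s).toNat, by omega⟩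
  set v := c ^ ((a : ℤ) - b) * F.eval c
  have hroot : (X ^ a * F - C v * X ^ b).IsRoot c := by
    simp only [IsRoot.def, eval_sub, eval_mul, eval_pow, eval_X, eval_C, v, zpow_sub₀ hc,
      zpow_natCast]
    field_simp
    ring
  obtain ⟨H, hH⟩ := dvd_iff_isRoot.mpr hroot
  refine ⟨-b, H, ?_⟩
  have h := congrArg (algebraMap K[X] (RatFunc K)) (sub_eq_iff_eq_add.mp hH)
  simp only [map_add, map_mul, map_pow, map_sub, RatFunc.algebraMap_X, RatFunc.algebraMap_C] at h
  have hX : (RatFunc.X : RatFunc K) ≠ 0 := RatFunc.X_ne_zero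
  rw [zpow_sub₀ hX, zpow_neg, zpow_natCast, zpow_natCast, div_mul_eq_mul_div, h]
  field_simp

section
variable {σ : RatFunc K →ₐ[K] RatFunc K} (hσ : σ RatFunc.X = RatFunc.X⁻¹)
include hσ

lemma map_X_zpow_of_map_X_eq_inv (n : ℤ) : σ (RatFunc.X ^ n) = RatFunc.X ^ (-n) := by
  rw [map_zpow₀, hσ, inv_zpow', zpow_neg]

lemma resZeroAddResInfty_X_zpow (n : ℤ) : resZeroAddResInfty σ (RatFunc.X ^ n) = 0 := by
  rw [resZeroAddResInfty, LinearMap.add_apply, resInfty_apply, map_X_zpow_of_map_X_eq_inv hσ,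
    ← zpow_add₀ RatFunc.X_ne_zero, resZero_X_zpow, resZero_X_zpow]
  by_cases h : n = -1
  · simp [h]
  · rw [if_neg h, if_neg (by omega), neg_zero, add_zero]

lemma resZeroAddResInfty_X_zpow_mul_algebraMap (m : ℤ) (p : K[X]) :
    resZeroAddResInfty σ (RatFunc.X ^ m * algebraMap K[X] (RatFunc K) p) = 0 := by
  induction p using Polynomial.induction_on' with
  | add p q hp hq => rw [map_add, mul_add, map_add, hp, hq, add_zero]
  | monomial n a =>
    rw [RatFunc.algebraMap_monomial, mul_left_comm, ← zpow_natCast,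
      ← zpow_add₀ RatFunc.X_ne_zero, ← RatFunc.smul_eq_C_mul, map_smul,
      resZeroAddResInfty_X_zpow hσ, smul_zero]

lemma resInfty_inv_X_sub_C (c : K) : resInfty σ (RatFunc.X - RatFunc.C c)⁻¹ = -1 := by
  have h : RatFunc.X ^ (-2 : ℤ) * σ (RatFunc.X - RatFunc.C c)⁻¹ =
      RatFunc.X ^ (-1 : ℤ) * (algebraMap K[X] (RatFunc K) (1 - C c * X))⁻¹ := by
    rw [map_inv₀, map_sub, hσ, ← RatFunc.algebraMap_eq_C, AlgHom.commutes,
      RatFunc.algebraMap_eq_C]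
    have hX : (RatFunc.X : RatFunc K) ≠ 0 := RatFunc.X_ne_zero
    have h1 : (1 - RatFunc.C c * RatFunc.X : RatFunc K) ≠ 0 := by
      have hpoly : (1 - C c * X : K[X]) ≠ 0 := fun h ↦ by simpa using congrArg (coeff · 0) h
      simpa using RatFunc.algebraMap_ne_zero hpoly
    simp only [map_sub, map_one, map_mul, RatFunc.algebraMap_C, RatFunc.algebraMap_X, zpow_neg,
      zpow_ofNat]
    field_simp
  rw [resInfty_apply, h, resZero_X_zpow_neg_one_mul_inv_algebraMap (by simp)]
  simp

lemma resZeroAddResInfty_inv_X_sub_C {c : K} (hc : c ≠ 0) :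
    resZeroAddResInfty σ (RatFunc.X - RatFunc.C c)⁻¹ = -1 := by
  have hXc : (RatFunc.X - RatFunc.C c : RatFunc K) = algebraMap K[X] (RatFunc K) (X - C c) := by
    simp
  rw [resZeroAddResInfty, LinearMap.add_apply, resInfty_inv_X_sub_C hσ, hXc,
    resZero_inv_algebraMap (by simpa using hc), zero_add]

lemma resZeroAddResInfty_X_zpow_mul_algebraMap_div_X_sub_C (s : ℤ) (F : K[X]) {c : K}
    (hc : c ≠ 0) :
    resZeroAddResInfty σ
        (RatFunc.X ^ s * algebraMap K[X] (RatFunc K) F * (RatFunc.X - RatFunc.C c)⁻¹) =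
      -(c ^ s * F.eval c) := by
  obtain ⟨n, H, hH⟩ := exists_X_zpow_mul_algebraMap_eq s F hc
  have hXc : (RatFunc.X - RatFunc.C c : RatFunc K) ≠ 0 := by
    simpa using RatFunc.algebraMap_ne_zero (X_sub_C_ne_zero c)
  rw [hH, add_mul, mul_inv_cancel_right₀ hXc, ← RatFunc.smul_eq_C_mul, map_add, map_smul,
    resZeroAddResInfty_X_zpow_mul_algebraMap hσ, resZeroAddResInfty_inv_X_sub_C hσ hc,
    smul_eq_mul, mul_neg_one, zero_add]

theorem resZeroAddResInfty_mul_derivative_div_self (s k : ℤ) (F : K[X]) {Q : K[X]} (hQ : Q.Splits)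
    (hQ0 : Q.eval 0 ≠ 0) :
    resZeroAddResInfty σ (RatFunc.X ^ s * algebraMap K[X] (RatFunc K) F *
        (RatFunc.X ^ k * algebraMap K[X] (RatFunc K) Q).derivative /
        (RatFunc.X ^ k * algebraMap K[X] (RatFunc K) Q)) =
      -(Q.roots.map fun z ↦ z ^ s * F.eval z).sum := by
  have hQ0' : Q ≠ 0 := by
    rintro rfl
    exact hQ0 eval_zero
  have hX : (RatFunc.X : RatFunc K) ≠ 0 := RatFunc.X_ne_zero
  have hpole : RatFunc.X ^ s * algebraMap K[X] (RatFunc K) F * ((k : RatFunc K) * RatFunc.X⁻¹) =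
      k • (RatFunc.X ^ (s - 1) * algebraMap K[X] (RatFunc K) F) := by
    rw [zsmul_eq_mul, zpow_sub₀ hX, zpow_one]
    ring
  rw [mul_div_assoc, RatFunc.derivative_X_zpow_mul_div_self k hQ0',
    algebraMap_derivative_div_self_of_splits hQ hQ0', mul_add, hpole, ← Multiset.sum_map_mul_left,
    map_add, map_zsmul, resZeroAddResInfty_X_zpow_mul_algebraMap hσ, smul_zero, zero_add,
    map_multiset_sum, Multiset.map_map, ← Multiset.sum_map_neg]
  refine congrArg Multiset.sum (Multiset.map_congr rfl fun z hz ↦ ?_)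
  refine resZeroAddResInfty_X_zpow_mul_algebraMap_div_X_sub_C hσ s F ?_
  rintro rfl
  exact hQ0 (isRoot_of_mem_roots hz)

end

end

theorem stmt3_general (s k : ℤ) (F Q : Polynomial ℂ) (hQ0 : Q.eval 0 ≠ 0)
    (σ : RatFunc ℂ →ₐ[ℂ] RatFunc ℂ) (hσ : σ RatFunc.X = RatFunc.X⁻¹)
    (f P g : RatFunc ℂ)
    (hf : f = RatFunc.X ^ s * algebraMap (Polynomial ℂ) (RatFunc ℂ) F)
    (hP : P = RatFunc.X ^ k * algebraMap (Polynomial ℂ) (RatFunc ℂ) Q)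
    (hg : g = f *
      (algebraMap (Polynomial ℂ) (RatFunc ℂ)
          (Polynomial.derivative P.num * P.denom - P.num * Polynomial.derivative P.denom) /
        algebraMap (Polynomial ℂ) (RatFunc ℂ) (P.denom ^ 2)) / P) :
    (Q.roots.map fun z => z ^ s * F.eval z).sum =
      -(((g : LaurentSeries ℂ).coeff (-1)) +
        -(((RatFunc.X ^ (-2 : ℤ) * σ g : RatFunc ℂ) : LaurentSeries ℂ).coeff (-1))) := by
  subst hg hf hP
  change _ = -resZeroAddResInfty σ (_ * RatFunc.derivative _ / _)
  rw [resZeroAddResInfty_mul_derivative_div_self hσ s k F (IsAlgClosed.splits Q) hQ0, neg_neg]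

/-- Let `f = X^s F` and `P = X^k Q` be Laurent polynomials viewed as rational
functions in `ℂ(X)`, with `Q ≠ 0` and `Q(0) ≠ 0`, and let `g = f·P′/P`, where
`P′ = (num P)′·denom P - num P·(denom P)′) / (denom P)²` is the derivative of `P`. Then the
sum `Σ f(z)·μ(z)` over the roots `z ∈ ℂ*` of `P` (i.e. over the multiset of roots of `Q`)
equals `-(res₀ ω + res_∞ ω)`, where `res₀ ω` is the coefficient of `X⁻¹` in the Laurent
expansion of `g` at `0`, and `res_∞ ω = -(coefficient of `X⁻¹` in the Laurent expansion at
`0` of `X⁻²·ĝ`)`, `ĝ` being the image of `g` under the `ℂ`-algebra endomorphism `σ` of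
`ℂ(X)` sending `X` to `X⁻¹`. -/
theorem stmt3 (s k : ℤ) (F Q : Polynomial ℂ) (hQ : Q ≠ 0) (hQ0 : Q.eval 0 ≠ 0)
    (σ : RatFunc ℂ →ₐ[ℂ] RatFunc ℂ) (hσ : σ RatFunc.X = RatFunc.X⁻¹)
    (f P g : RatFunc ℂ)
    (hf : f = RatFunc.X ^ s * algebraMap (Polynomial ℂ) (RatFunc ℂ) F)
    (hP : P = RatFunc.X ^ k * algebraMap (Polynomial ℂ) (RatFunc ℂ) Q)
    (hg : g = f *
      (algebraMap (Polynomial ℂ) (RatFunc ℂ)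
          (Polynomial.derivative P.num * P.denom - P.num * Polynomial.derivative P.denom) /
        algebraMap (Polynomial ℂ) (RatFunc ℂ) (P.denom ^ 2)) / P) :
    (Q.roots.map fun z => z ^ s * F.eval z).sum =
      -(((g : LaurentSeries ℂ).coeff (-1)) +
        -(((RatFunc.X ^ (-2 : ℤ) * σ g : RatFunc ℂ) : LaurentSeries ℂ).coeff (-1))) :=
  stmt3_general s k F Q hQ0 σ hσ f P g hf hP hg
end

section
/- Fix integers k ≤ n and l ≤ m. There exists a multivariate polynomial R with integer coefficients in the variables A_k, …, A_n, B_l, …, B_m which is homogeneous of degree m − l in the A-variables and homogeneous of degree n − k in the B-variables, such that for every choice of complex coefficients (a_k, …, a_n, b_l, …, b_m) with a_k·a_n·b_l·b_m ≠ 0 the evaluation of R at these coefficients equals b_l^{−k}·b_m^{n}·Π^{[1]}; moreover the coefficient of the monomial A_k^{m−l}·B_m^{n−k} in R equals (−1)^{k(m−l)}. -/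
/-!
Up to the sign `(-1)^(k(m-l))`, `R` is the Sylvester resultant `Res(P₂, P₁)` of the generic
polynomials of formal degrees `m - l` and `n - k` whose coefficients are the indeterminates.
Every term of the Sylvester determinant takes one entry from each column, i.e. `m - l` of the
`A`'s and `n - k` of the `B`'s, which gives the bihomogeneity. Killing all variables except
`A_k` and `B_m` turns `R` into `±Res(B_m X^(m-l), A_k) = ±B_m^(n-k) A_k^(m-l)`, which gives the
coefficient. At complex coefficients, `Res(P₂, P₁) = b_m^(n-k) ∏_y P₁(y)` and Vieta's
`∏_y y = (-1)^(m-l) b_l / b_m` turn `R` into `b_l^(-k) b_m^n ∏_y y^k P₁(y)`.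
-/

open Polynomial

namespace MvPolynomial

theorem IsWeightedHomogeneous.det {ι σ R M : Type*} [Fintype ι] [DecidableEq ι] [CommRing R]
    [AddCommMonoid M] {w : σ → M} {A : Matrix ι ι (MvPolynomial σ R)} {c : ι → M}
    (hA : ∀ i j, (A i j).IsWeightedHomogeneous w (c j)) :
    A.det.IsWeightedHomogeneous w (∑ j, c j) := by
  rw [Matrix.det_apply]
  refine IsWeightedHomogeneous.sum _ _ _ fun τ _ => ?_
  rw [Units.smul_def]
  exact Submodule.smul_of_tower_mem (weightedHomogeneousSubmodule R w _) _
    (IsWeightedHomogeneous.prod _ _ _ fun i _ => hA _ _)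

theorem IsWeightedHomogeneous.sum_inl_eq_and_sum_inr_eq {α β R : Type*} [Fintype α] [Fintype β]
    [CommSemiring R] {p : MvPolynomial (α ⊕ β) R} {a b : ℕ}
    (hp : p.IsWeightedHomogeneous (Sum.elim (fun _ => (1, 0)) (fun _ => (0, 1))) (a, b))
    {d : α ⊕ β →₀ ℕ} (hd : d ∈ p.support) :
    ∑ i, d (.inl i) = a ∧ ∑ j, d (.inr j) = b := by
  have := hp (mem_support_iff.1 hd)
  rw [Finsupp.weight_apply, Finsupp.sum_fintype _ _ (by simp), Fintype.sum_sum_type] at this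
  simpa [Prod.ext_iff, Prod.fst_sum, Prod.snd_sum] using this

section killCompl

variable {σ τ R : Type*} [CommSemiring R] {f : σ → τ} (hf : f.Injective)

theorem killCompl_X_apply (x : σ) : killCompl (R := R) hf (X (f x)) = X x := by
  rw [← rename_X, killCompl_rename_app]

theorem killCompl_X_of_notMem_range {y : τ} (hy : y ∉ Set.range f) :
    killCompl (R := R) hf (X y) = 0 := by
  simp [killCompl, hy]

end killCompl

end MvPolynomial

namespace Polynomial

section sumFin

variable {R : Type*} [Semiring R] {N : ℕ}

theorem coeff_sum_fin_C_mul_X_pow (c : Fin N → R) (t : ℕ) :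
    (∑ i : Fin N, C (c i) * X ^ (i : ℕ)).coeff t = if h : t < N then c ⟨t, h⟩ else 0 := by
  simp only [finsetSum_coeff, coeff_C_mul_X_pow]
  split_ifs with h
  · rw [Finset.sum_eq_single ⟨t, h⟩] <;> aesop
  · exact Finset.sum_eq_zero fun i _ => if_neg (by omega)

theorem coeff_zero_sum_fin_C_mul_X_pow (c : Fin (N + 1) → R) :
    (∑ i : Fin (N + 1), C (c i) * X ^ (i : ℕ)).coeff 0 = c 0 := by
  rw [coeff_sum_fin_C_mul_X_pow, dif_pos N.succ_pos]
  rfl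

theorem natDegree_sum_fin_C_mul_X_pow_le (c : Fin (N + 1) → R) :
    (∑ i : Fin (N + 1), C (c i) * X ^ (i : ℕ)).natDegree ≤ N :=
  natDegree_le_of_degree_le (Order.le_of_lt_succ (degree_sum_fin_lt c))

theorem natDegree_sum_fin_C_mul_X_pow {c : Fin (N + 1) → R} (hc : c (Fin.last N) ≠ 0) :
    (∑ i : Fin (N + 1), C (c i) * X ^ (i : ℕ)).natDegree = N := by
  refine natDegree_eq_of_le_of_coeff_ne_zero (natDegree_sum_fin_C_mul_X_pow_le c) ?_
  rwa [coeff_sum_fin_C_mul_X_pow, dif_pos N.lt_succ_self]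

theorem leadingCoeff_sum_fin_C_mul_X_pow {c : Fin (N + 1) → R} (hc : c (Fin.last N) ≠ 0) :
    (∑ i : Fin (N + 1), C (c i) * X ^ (i : ℕ)).leadingCoeff = c (Fin.last N) := by
  rw [leadingCoeff, natDegree_sum_fin_C_mul_X_pow hc, coeff_sum_fin_C_mul_X_pow,
    dif_pos N.lt_succ_self, Fin.last]

end sumFin

open MvPolynomial in
theorem isWeightedHomogeneous_resultant {σ R M : Type*} [CommRing R] [AddCommMonoid M]
    {w : σ → M} {f g : (MvPolynomial σ R)[X]} {df dg : M}
    (hf : ∀ i, (f.coeff i).IsWeightedHomogeneous w df)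
    (hg : ∀ i, (g.coeff i).IsWeightedHomogeneous w dg) (m n : ℕ) :
    (resultant f g m n).IsWeightedHomogeneous w (m • dg + n • df) := by
  have := IsWeightedHomogeneous.det (A := sylvester f g m n)
    (c := Fin.addCases (fun _ => dg) (fun _ => df)) fun i j => by
      induction j using Fin.addCases <;>
        simp only [sylvester, Matrix.of_apply, Fin.addCases_left, Fin.addCases_right] <;>
        split_ifs <;> first | exact hg _ | exact hf _ | exact isWeightedHomogeneous_zero _ _ _
  simpa [resultant, Fin.sum_univ_add] using this

theorem Splits.prod_roots_map_zpow_mul_eval {F : Type*} [Field F] {p : F[X]} (hp : p.Splits)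
    (hp0 : p ≠ 0) (q : F[X]) (k : ℤ) :
    (p.roots.map fun y => y ^ k * q.eval y).prod =
      ((-1) ^ p.natDegree * p.coeff 0 / p.leadingCoeff) ^ k * (p.roots.map q.eval).prod := by
  rw [Multiset.prod_map_mul, Multiset.prod_map_zpow, Multiset.map_id',
    hp.coeff_zero_eq_leadingCoeff_mul_prod_roots, ← mul_assoc, ← mul_assoc, ← pow_add,
    Even.neg_one_pow ⟨_, rfl⟩, one_mul, mul_div_cancel_left₀ _ (leadingCoeff_ne_zero.2 hp0)]

end Polynomial

theorem neg_one_zpow_eq_pow_natAbs {F : Type*} [DivisionRing F] (z : ℤ) :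
    (-1 : F) ^ z = (-1) ^ z.natAbs := by
  obtain ⟨n, rfl | rfl⟩ := z.eq_nat_or_neg <;> simp [← inv_pow]

noncomputable def genericPoly {σ : Type*} {N : ℕ} (v : Fin N → σ) : (MvPolynomial σ ℤ)[X] :=
  ∑ i : Fin N, C (MvPolynomial.X (v i)) * X ^ (i : ℕ)

section genericPoly

variable {σ : Type*} {N : ℕ} (v : Fin N → σ)

theorem isWeightedHomogeneous_coeff_genericPoly {M : Type*} [AddCommMonoid M] {w : σ → M}
    {e : M} (hv : ∀ i, w (v i) = e) (t : ℕ) :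
    ((genericPoly v).coeff t).IsWeightedHomogeneous w e := by
  rw [genericPoly, coeff_sum_fin_C_mul_X_pow]
  split_ifs
  · exact hv _ ▸ MvPolynomial.isWeightedHomogeneous_X ℤ w _
  · exact MvPolynomial.isWeightedHomogeneous_zero ℤ w e

theorem map_genericPoly {S : Type*} [CommRing S] (φ : MvPolynomial σ ℤ →+* S) :
    (genericPoly v).map φ = ∑ i, C (φ (MvPolynomial.X (v i))) * X ^ (i : ℕ) := by
  simp [genericPoly, Polynomial.map_sum]

theorem map_aeval_genericPoly {S : Type*} [CommRing S] (x : σ → S) :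
    (genericPoly v).map
        ((MvPolynomial.aeval x : MvPolynomial σ ℤ →ₐ[ℤ] S) : MvPolynomial σ ℤ →+* S) =
      ∑ i, C (x (v i)) * X ^ (i : ℕ) := by
  simp [map_genericPoly]

end genericPoly

noncomputable def universalResultant (K M : ℕ) : MvPolynomial (Fin (K + 1) ⊕ Fin (M + 1)) ℤ :=
  resultant (genericPoly (Sum.inr : Fin (M + 1) → _))
    (genericPoly (Sum.inl : Fin (K + 1) → _)) M K

section universalResultant

variable (K M : ℕ)

theorem isWeightedHomogeneous_universalResultant :
    (universalResultant K M).IsWeightedHomogeneous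
      (Sum.elim (fun _ => (1, 0)) (fun _ => (0, 1))) (M, K) := by
  rw [show (M, K) = M • (1, 0) + K • (0, 1) by simp]
  exact isWeightedHomogeneous_resultant
    (isWeightedHomogeneous_coeff_genericPoly (w := Sum.elim (fun _ => (1, 0)) (fun _ => (0, 1)))
      (e := (0, 1)) (Sum.inr : Fin (M + 1) → _) fun _ => rfl)
    (isWeightedHomogeneous_coeff_genericPoly (e := (1, 0)) (Sum.inl : Fin (K + 1) → _)
      fun _ => rfl) M K

theorem coeff_universalResultant :
    MvPolynomial.coeff (Finsupp.single (Sum.inl 0) M + Finsupp.single (Sum.inr (Fin.last M)) K)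
      (universalResultant K M) = 1 := by
  let f : Unit ⊕ Unit → Fin (K + 1) ⊕ Fin (M + 1) :=
    Sum.map (fun _ => 0) (fun _ => Fin.last M)
  have hf : f.Injective := Sum.map_injective.2
    ⟨Function.injective_of_subsingleton _, Function.injective_of_subsingleton _⟩
  have hA : (genericPoly (Sum.inl : Fin (K + 1) → _)).map (MvPolynomial.killCompl (R := ℤ) hf :
      MvPolynomial (Fin (K + 1) ⊕ Fin (M + 1)) ℤ →+* MvPolynomial (Unit ⊕ Unit) ℤ) =
        C (MvPolynomial.X (Sum.inl ())) := by
    rw [map_genericPoly, Fin.sum_univ_succ, Finset.sum_eq_zero, add_zero]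
    · rw [Fin.val_zero, pow_zero, mul_one]
      exact congrArg C (MvPolynomial.killCompl_X_apply hf (.inl ()))
    · intro i _
      rw [RingHom.coe_coe, MvPolynomial.killCompl_X_of_notMem_range hf, map_zero, zero_mul]
      simp [f, (Fin.succ_ne_zero i).symm]
  have hB : (genericPoly (Sum.inr : Fin (M + 1) → _)).map (MvPolynomial.killCompl (R := ℤ) hf :
      MvPolynomial (Fin (K + 1) ⊕ Fin (M + 1)) ℤ →+* MvPolynomial (Unit ⊕ Unit) ℤ) =
        C (MvPolynomial.X (Sum.inr ())) * X ^ M := by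
    rw [map_genericPoly, Fin.sum_univ_castSucc, Finset.sum_eq_zero, zero_add]
    · exact congrArg (C · * X ^ M) (MvPolynomial.killCompl_X_apply hf (.inr ()))
    · intro i _
      rw [RingHom.coe_coe, MvPolynomial.killCompl_X_of_notMem_range hf, map_zero, zero_mul]
      simp [f, (Fin.castSucc_lt_last i).ne']
  have hd : Finsupp.single (Sum.inl 0) M + Finsupp.single (Sum.inr (Fin.last M)) K =
      (Finsupp.single (Sum.inl () : Unit ⊕ Unit) M + Finsupp.single (Sum.inr ()) K).mapDomain
        f := by
    simp [Finsupp.mapDomain_add, f]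
  rw [hd, ← MvPolynomial.coeff_killCompl hf, universalResultant, ← AlgHom.coe_toRingHom,
    ← resultant_map_map, hA, hB, resultant_C_right, coeff_C_mul_X_pow, if_pos rfl,
    MvPolynomial.X_pow_eq_monomial, MvPolynomial.X_pow_eq_monomial, MvPolynomial.monomial_mul,
    MvPolynomial.coeff_monomial, if_pos (add_comm _ _), one_mul]

theorem aeval_universalResultant {S : Type*} [CommRing S] (a : Fin (K + 1) → S)
    (b : Fin (M + 1) → S) :
    MvPolynomial.aeval (Sum.elim a b) (universalResultant K M) =
      resultant (∑ j, C (b j) * X ^ (j : ℕ)) (∑ i, C (a i) * X ^ (i : ℕ)) M K := by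
  rw [universalResultant, ← AlgHom.coe_toRingHom, ← resultant_map_map, map_aeval_genericPoly,
    map_aeval_genericPoly]
  rfl

theorem aeval_universalResultant_of_isAlgClosed {F : Type*} [Field F] [IsAlgClosed F]
    (a : Fin (K + 1) → F) (b : Fin (M + 1) → F) (hb : b (Fin.last M) ≠ 0) :
    MvPolynomial.aeval (Sum.elim a b) (universalResultant K M) =
      b (Fin.last M) ^ K * ((∑ j, C (b j) * X ^ (j : ℕ)).roots.map
        (∑ i, C (a i) * X ^ (i : ℕ)).eval).prod := by
  have h := resultant_eq_prod_eval _ _ K (natDegree_sum_fin_C_mul_X_pow_le a)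
    (IsAlgClosed.splits (∑ j, C (b j) * X ^ (j : ℕ)))
  rwa [natDegree_sum_fin_C_mul_X_pow hb, leadingCoeff_sum_fin_C_mul_X_pow hb,
    ← aeval_universalResultant] at h

end universalResultant

/-- Variables: `Sum.inl i` stands for `A_{k+i}` and `Sum.inr j` for `B_{l+j}`. -/
theorem stmt6 (k n l m : ℤ) (hkn : k ≤ n) (hlm : l ≤ m) :
    ∃ R : MvPolynomial (Fin ((n - k).toNat + 1) ⊕ Fin ((m - l).toNat + 1)) ℤ,
      (∀ d ∈ R.support,
          (∑ i : Fin ((n - k).toNat + 1), d (Sum.inl i)) = (m - l).toNat ∧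
          (∑ j : Fin ((m - l).toNat + 1), d (Sum.inr j)) = (n - k).toNat) ∧
      MvPolynomial.coeff
          (Finsupp.single (Sum.inl (0 : Fin ((n - k).toNat + 1))) (m - l).toNat +
            Finsupp.single (Sum.inr (Fin.last (m - l).toNat)) (n - k).toNat) R =
        (-1 : ℤ) ^ (k * (m - l)).natAbs ∧
      ∀ (a : Fin ((n - k).toNat + 1) → ℂ) (b : Fin ((m - l).toNat + 1) → ℂ),
        a 0 ≠ 0 → a (Fin.last (n - k).toNat) ≠ 0 →
        b 0 ≠ 0 → b (Fin.last (m - l).toNat) ≠ 0 →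
        MvPolynomial.aeval (Sum.elim a b) R =
          (b 0) ^ (-k) * (b (Fin.last (m - l).toNat)) ^ n *
            (((∑ j : Fin ((m - l).toNat + 1), C (b j) * X ^ (j : ℕ)).roots.map
              fun y => y ^ k *
                (∑ i : Fin ((n - k).toNat + 1), C (a i) * X ^ (i : ℕ)).eval y).prod) := by
  set K := (n - k).toNat
  set M := (m - l).toNat
  have hK : (K : ℤ) = n - k := Int.toNat_of_nonneg (sub_nonneg.2 hkn)
  have hM : (M : ℤ) = m - l := Int.toNat_of_nonneg (sub_nonneg.2 hlm)
  refine ⟨MvPolynomial.C ((-1) ^ (k * (m - l)).natAbs) * universalResultant K M, ?_, ?_, ?_⟩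
  · intro d hd
    exact ((isWeightedHomogeneous_universalResultant K M).C_mul _).sum_inl_eq_and_sum_inr_eq hd
  · rw [MvPolynomial.coeff_C_mul, coeff_universalResultant, mul_one]
  intro a b _ _ hb₀ hbM
  have hprod := Splits.prod_roots_map_zpow_mul_eval
    (IsAlgClosed.splits (∑ j : Fin (M + 1), C (b j) * X ^ (j : ℕ)))
    (leadingCoeff_ne_zero.1 (by rwa [leadingCoeff_sum_fin_C_mul_X_pow hbM]))
    (∑ i : Fin (K + 1), C (a i) * X ^ (i : ℕ)) k
  rw [natDegree_sum_fin_C_mul_X_pow hbM, leadingCoeff_sum_fin_C_mul_X_pow hbM,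
    coeff_zero_sum_fin_C_mul_X_pow] at hprod
  have hsign : algebraMap ℤ ℂ ((-1) ^ (k * (m - l)).natAbs) = ((-1) ^ M) ^ k := by
    rw [eq_intCast, Int.cast_pow, Int.cast_neg, Int.cast_one, ← neg_one_zpow_eq_pow_natAbs,
      ← zpow_natCast, ← zpow_mul, hM, mul_comm]
  have hpow : b (Fin.last M) ^ K = b (Fin.last M) ^ n * (b (Fin.last M) ^ k)⁻¹ := by
    rw [← zpow_natCast, hK, zpow_sub₀ hbM, div_eq_mul_inv]
  rw [map_mul, MvPolynomial.algHom_C, aeval_universalResultant_of_isAlgClosed K M a b hbM, hprod,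
    hsign, hpow, div_zpow, mul_zpow, zpow_neg]
  field_simp
end

section
/- Let Δ₁, …, Δ_{n+1} be polytopes (convex hulls of nonempty finite sets) in ℝ^n and let 1 ≤ i < j ≤ n+1. Then the collection (Δ₁, …, Δ_{n+1}) is both i-developed and j-developed if and only if the n-tuple consisting of the Minkowski sum Δ_i + Δ_j together with the polytopes Δ_t for t ∉ {i, j} is developed. -/
open Pointwise

/-- A tuple of polytopes in `ℝⁿ` (indexed by `ι`) is *developed* if for every nonzero linear
functional `v` there is an index `t` such that `v` attains its maximum on the `t`-th polytope
at exactly one point (a vertex). -/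
def IsDeveloped {n : ℕ} {ι : Type*} (Δ : ι → Set (Fin n → ℝ)) : Prop :=
  ∀ v : (Fin n → ℝ) →ₗ[ℝ] ℝ, v ≠ 0 →
    ∃ t : ι, ∃! y : Fin n → ℝ, y ∈ Δ t ∧ ∀ z ∈ Δ t, v z ≤ v y



lemma exists_max_hull {n : ℕ} (v : (Fin n → ℝ) →ₗ[ℝ] ℝ) (S : Finset (Fin n → ℝ))
    (hS : S.Nonempty) :
    ∃ x ∈ convexHull ℝ (S : Set (Fin n → ℝ)),
      ∀ z ∈ convexHull ℝ (S : Set (Fin n → ℝ)), v z ≤ v x := by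
  obtain ⟨x, hxS, hx⟩ := S.exists_max_image v hS
  refine ⟨x, subset_convexHull ℝ _ hxS, fun z hz => ?_⟩
  have h : convexHull ℝ (S : Set (Fin n → ℝ)) ⊆ {w | v w ≤ v x} :=
    convexHull_min (fun p hp => hx p hp) (convex_halfSpace_le v.isLinear _)
  exact h hz

lemma unique_max_add {n : ℕ} {P Q : Set (Fin n → ℝ)} {v : (Fin n → ℝ) →ₗ[ℝ] ℝ}
    (hP : ∃! y, y ∈ P ∧ ∀ z ∈ P, v z ≤ v y) (hQ : ∃! y, y ∈ Q ∧ ∀ z ∈ Q, v z ≤ v y) :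
    ∃! y, y ∈ P + Q ∧ ∀ z ∈ P + Q, v z ≤ v y := by
  obtain ⟨x, ⟨hxP, hx⟩, hux⟩ := hP
  obtain ⟨y, ⟨hyQ, hy⟩, huy⟩ := hQ
  refine ⟨x + y, ⟨Set.add_mem_add hxP hyQ, ?_⟩, ?_⟩
  · rintro z ⟨p, hp, q, hq, rfl⟩
    simpa [map_add] using add_le_add (hx p hp) (hy q hq)
  · rintro z ⟨⟨p, hp, q, hq, rfl⟩, hmax⟩
    have h1 : v p ≤ v x := hx p hp
    have h2 : v q ≤ v y := hy q hq
    have h3 : v x + v y ≤ v p + v q := by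
      have := hmax (x + y) (Set.add_mem_add hxP hyQ)
      simpa [map_add] using this
    have e1 : v p = v x := le_antisymm h1 (by linarith)
    have e2 : v q = v y := le_antisymm h2 (by linarith)
    have hpx : p = x := hux p ⟨hp, fun z hz => (hx z hz).trans e1.ge⟩
    have hqy : q = y := huy q ⟨hq, fun z hz => (hy z hz).trans e2.ge⟩
    rw [hpx, hqy]

lemma unique_max_of_add {n : ℕ} {P Q : Set (Fin n → ℝ)} {v : (Fin n → ℝ) →ₗ[ℝ] ℝ}
    (hP : ∃ x ∈ P, ∀ z ∈ P, v z ≤ v x) (hQ : ∃ y ∈ Q, ∀ z ∈ Q, v z ≤ v y)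
    (h : ∃! y, y ∈ P + Q ∧ ∀ z ∈ P + Q, v z ≤ v y) :
    (∃! y, y ∈ P ∧ ∀ z ∈ P, v z ≤ v y) ∧ (∃! y, y ∈ Q ∧ ∀ z ∈ Q, v z ≤ v y) := by
  obtain ⟨x, hxP, hx⟩ := hP
  obtain ⟨y, hyQ, hy⟩ := hQ
  obtain ⟨w, -, huw⟩ := h
  have key : ∀ x' ∈ P, (∀ z ∈ P, v z ≤ v x') → ∀ y' ∈ Q, (∀ z ∈ Q, v z ≤ v y') →
      x' + y' = w := by
    intro x' hx'P hx' y' hy'Q hy'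
    refine huw _ ⟨Set.add_mem_add hx'P hy'Q, ?_⟩
    rintro z ⟨p, hp, q, hq, rfl⟩
    simpa [map_add] using add_le_add (hx' p hp) (hy' q hq)
  constructor
  · refine ⟨x, ⟨hxP, hx⟩, fun x' ⟨hx'P, hx'⟩ => ?_⟩
    have := (key x' hx'P hx' y hyQ hy).trans (key x hxP hx y hyQ hy).symm
    exact add_right_cancel this
  · refine ⟨y, ⟨hyQ, hy⟩, fun y' ⟨hy'Q, hy'⟩ => ?_⟩
    have := (key x hxP hx y' hy'Q hy').trans (key x hxP hx y hyQ hy).symm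
    exact add_left_cancel this

/-- Let `Δ₁, …, Δ_{n+1}` be polytopes (convex hulls of nonempty finite sets)
in `ℝⁿ` and `i < j`. The collection is both `i`-developed and `j`-developed if and only if the
`n`-tuple consisting of the Minkowski sum `Δ_i + Δ_j` together with the `Δ_t`, `t ∉ {i, j}`,
is developed. -/
theorem stmt7 (n : ℕ) (Δ : Fin (n + 1) → Set (Fin n → ℝ))
    (hΔ : ∀ t, ∃ S : Finset (Fin n → ℝ), S.Nonempty ∧ Δ t = convexHull ℝ (S : Set (Fin n → ℝ)))
    (i j : Fin (n + 1)) (hij : i < j) :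
    (IsDeveloped (fun t : Fin n => Δ (i.succAbove t)) ∧
      IsDeveloped (fun t : Fin n => Δ (j.succAbove t))) ↔
    IsDeveloped (fun t : Option {t : Fin (n + 1) // t ≠ i ∧ t ≠ j} =>
      t.elim (Δ i + Δ j) fun s => Δ s.1) := by
  have hmax : ∀ (t : Fin (n + 1)) (v : (Fin n → ℝ) →ₗ[ℝ] ℝ),
      ∃ x ∈ Δ t, ∀ z ∈ Δ t, v z ≤ v x := by
    intro t v
    obtain ⟨S, hS, hSe⟩ := hΔ t
    rw [hSe]
    exact exists_max_hull v S hS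
  have hne : i ≠ j := ne_of_lt hij
  constructor
  · rintro ⟨hi, hj⟩ v hv
    obtain ⟨t, ht⟩ := hi v hv
    by_cases hti : i.succAbove t = j
    · -- Δ j has a unique maximizer
      simp only [hti] at ht
      obtain ⟨s, hs⟩ := hj v hv
      by_cases hsj : j.succAbove s = i
      · simp only [hsj] at hs
        exact ⟨none, unique_max_add hs ht⟩
      · exact ⟨some ⟨j.succAbove s, hsj, Fin.succAbove_ne j s⟩, hs⟩
    · exact ⟨some ⟨i.succAbove t, Fin.succAbove_ne i t, hti⟩, ht⟩
  · intro h
    constructor <;> intro v hv <;> obtain ⟨t, ht⟩ := h v hv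
    · match t with
      | none =>
          obtain ⟨-, hj'⟩ := unique_max_of_add (hmax i v) (hmax j v) ht
          obtain ⟨k, hk⟩ := Fin.exists_succAbove_eq hne.symm
          exact ⟨k, by simpa only [hk] using hj'⟩
      | some ⟨a, hai, haj⟩ =>
          obtain ⟨k, hk⟩ := Fin.exists_succAbove_eq hai
          exact ⟨k, by simpa only [hk, Option.elim_some] using ht⟩
    · match t with
      | none =>
          obtain ⟨hi', -⟩ := unique_max_of_add (hmax i v) (hmax j v) ht
          obtain ⟨k, hk⟩ := Fin.exists_succAbove_eq hne
          exact ⟨k, by simpa only [hk] using hi'⟩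
      | some ⟨a, hai, haj⟩ =>
          obtain ⟨k, hk⟩ := Fin.exists_succAbove_eq haj
          exact ⟨k, by simpa only [hk, Option.elim_some] using ht⟩
end

section
/- Fix n ≥ 1 and let L = (ZMod 2)^n. Suppose k₁, …, k_{n+1} ∈ L span L. Then the kernel of the 𝔽₂-linear map 𝔽₂^{n+1} → L sending (λ₁, …, λ_{n+1}) to λ₁k₁ + ⋯ + λ_{n+1}k_{n+1} contains exactly one nonzero element λ = (λ₁, …, λ_{n+1}). Define D₁ : L^{n+1} → 𝔽₂ by D₁(k₁, …, k_{n+1}) := 1 + λ₁ + ⋯ + λ_{n+1} when k₁, …, k_{n+1} span L (with λ the unique nonzero element of that kernel), and D₁(k₁, …, k_{n+1}) := 0 otherwise. Then D₁ is GL-invariant, rank-vanishing, multilinear, and not identically zero. -/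
/-!
Since `k` spans, `λ ↦ ∑ λₜ kₜ` is onto `L`, so its kernel is a line, and a line over `𝔽₂` has
exactly one nonzero point. GL-invariance holds because `A` preserves spanning and relations.

For additivity in slot `t`, let `V` be the span of the other `kₛ`. If `V = L`, writing
`z = ∑_{s ≠ t} cₛ kₛ` gives the relation `c + e_t`, so `D₁ = ∑ cₛ`, which is additive in `z`.
If `V ≠ L`, the family spans iff `V + 𝔽₂ z = L`; any relation then vanishes at `t`, so `D₁` takes
a single value on all spanning `z`, while over `𝔽₂` the condition `V + 𝔽₂ z = L` is itself
additive in `z` (it says `z ∉ V` for a hyperplane `V`, or never holds).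
-/

/-- `D` is invariant under the natural `GL(n, 𝔽₂)`-action on `(n+1)`-tuples of vectors of
`L = 𝔽₂ⁿ`. -/
def GLInvariant (n : ℕ) (D : (Fin (n + 1) → Fin n → ZMod 2) → ZMod 2) : Prop :=
  ∀ (A : (Fin n → ZMod 2) ≃ₗ[ZMod 2] (Fin n → ZMod 2)) (k : Fin (n + 1) → Fin n → ZMod 2),
    D (fun t => A (k t)) = D k

/-- `D` vanishes on tuples whose span is a proper subspace of `L = 𝔽₂ⁿ` (rank `< n`). -/
def RankVanishing (n : ℕ) (D : (Fin (n + 1) → Fin n → ZMod 2) → ZMod 2) : Prop :=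
  ∀ k : Fin (n + 1) → Fin n → ZMod 2,
    Submodule.span (ZMod 2) (Set.range k) ≠ ⊤ → D k = 0

/-- `D` is multilinear: in each argument, with the others fixed, it is additive
(equivalently `𝔽₂`-linear). -/
def Multilinear (n : ℕ) (D : (Fin (n + 1) → Fin n → ZMod 2) → ZMod 2) : Prop :=
  ∀ (t : Fin (n + 1)) (k : Fin (n + 1) → Fin n → ZMod 2) (x y : Fin n → ZMod 2),
    D (Function.update k t (x + y)) = D (Function.update k t x) + D (Function.update k t y)

open Module Submodule Function Set

theorem ZMod.eq_zero_or_eq_one (c : ZMod 2) : c = 0 ∨ c = 1 := by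
  revert c; decide

theorem span_range_linearEquiv_comp_eq_top_iff {R M ι : Type*} [Semiring R] [AddCommMonoid M]
    [Module R M] (A : M ≃ₗ[R] M) (k : ι → M) :
    span R (range fun t => A (k t)) = ⊤ ↔ span R (range k) = ⊤ := by
  rw [range_comp' A k, span_image_linearEquiv, Submodule.map_eq_top_iff]

section Relations

variable {K M ι : Type*} [Field K] [AddCommGroup M] [Module K M] [Fintype ι]

theorem finrank_ker_linearCombination_add_finrank [FiniteDimensional K M] {k : ι → M}
    (hk : span K (range k) = ⊤) :
    finrank K (LinearMap.ker (Fintype.linearCombination K k)) + finrank K M = Fintype.card ι := by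
  have h := LinearMap.finrank_range_add_finrank_ker (Fintype.linearCombination K k)
  rw [Fintype.range_linearCombination, hk, finrank_top, finrank_fintype_fun_eq_card] at h
  omega

theorem exists_ne_zero_sum_smul_eq_zero [FiniteDimensional K M]
    (hcard : finrank K M < Fintype.card ι) (k : ι → M) :
    ∃ lam : ι → K, lam ≠ 0 ∧ ∑ t, lam t • k t = 0 := by
  have hk : ¬LinearIndependent K k := fun hk => hcard.not_ge hk.fintype_card_le_finrank
  obtain ⟨lam, hsum, t, ht⟩ := Fintype.not_linearIndependent_iff.mp hk
  exact ⟨lam, fun h => ht (congrFun h t), hsum⟩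

end Relations

theorem existsUnique_ne_zero_of_finrank_eq_one {M : Type*} [AddCommGroup M] [Module (ZMod 2) M]
    {W : Submodule (ZMod 2) M} (hW : finrank (ZMod 2) W = 1) : ∃! v, v ≠ 0 ∧ v ∈ W := by
  obtain ⟨v, hv, hW⟩ := finrank_eq_one_iff'.mp hW
  refine ⟨v, ⟨by simpa using hv, v.2⟩, fun w ⟨hw, hwW⟩ => ?_⟩
  obtain ⟨c, hc⟩ := hW ⟨w, hwW⟩
  have hc' : c • (v : M) = w := congrArg Subtype.val hc
  rcases c.eq_zero_or_eq_one with rfl | rfl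
  · simp [← hc'] at hw
  · simpa using hc'.symm

theorem existsUnique_ne_zero_sum_smul_eq_zero {ι M : Type*} [Fintype ι] [AddCommGroup M]
    [Module (ZMod 2) M] [FiniteDimensional (ZMod 2) M] {k : ι → M}
    (hk : span (ZMod 2) (range k) = ⊤) (hcard : Fintype.card ι = finrank (ZMod 2) M + 1) :
    ∃! lam : ι → ZMod 2, lam ≠ 0 ∧ ∑ t, lam t • k t = 0 := by
  have h := finrank_ker_linearCombination_add_finrank hk
  simpa [Fintype.linearCombination_apply] using
    existsUnique_ne_zero_of_finrank_eq_one
      (W := LinearMap.ker (Fintype.linearCombination (ZMod 2) k)) (by omega)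

section Update

variable {R M ι : Type*} [DecidableEq ι]

theorem span_range_update [Semiring R] [AddCommMonoid M] [Module R M] (k : ι → M) (t : ι)
    (z : M) : span R (range (update k t z)) = span R (range (update k t 0)) ⊔ span R {z} := by
  apply le_antisymm
  · rw [span_le]
    rintro _ ⟨s, rfl⟩
    rcases eq_or_ne s t with rfl | h
    · simpa using mem_sup_right (mem_span_singleton_self z)
    · exact mem_sup_left (subset_span ⟨s, by simp [h]⟩)
  · refine sup_le (span_le.mpr ?_)
      ((span_singleton_le_iff_mem _ _).mpr (subset_span ⟨t, by simp⟩))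
    rintro _ ⟨s, rfl⟩
    rcases eq_or_ne s t with rfl | h
    · simp
    · exact subset_span ⟨s, by simp [h]⟩

variable [Fintype ι]

theorem sum_smul_eq_smul_add_sum_smul_update_zero [Semiring R] [AddCommMonoid M] [Module R M]
    (lam : ι → R) (k : ι → M) (t : ι) :
    ∑ s, lam s • k s = lam t • k t + ∑ s, lam s • update k t 0 s := by
  have h : (fun s => lam s • update k t 0 s) = update (fun s => lam s • k s) t 0 := by
    ext s; rcases eq_or_ne s t with rfl | h <;> simp [*]
  rw [h, Finset.sum_update_of_mem (Finset.mem_univ t), zero_add,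
    Finset.sum_eq_add_sum_sdiff_singleton_of_mem (Finset.mem_univ t)]

theorem sum_smul_update_of_eq_zero [Semiring R] [AddCommMonoid M] [Module R M] {lam : ι → R}
    {t : ι} (ht : lam t = 0) (k : ι → M) (z : M) :
    ∑ s, lam s • update k t z s = ∑ s, lam s • k s := by
  rw [sum_smul_eq_smul_add_sum_smul_update_zero lam _ t,
    sum_smul_eq_smul_add_sum_smul_update_zero lam k t, update_idem, ht, zero_smul, zero_smul]

theorem exists_sum_smul_eq_of_mem_span_range_update_zero [Semiring R] [AddCommMonoid M]
    [Module R M] {k : ι → M} {t : ι} {z : M} (hz : z ∈ span R (range (update k t 0))) :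
    ∃ c : ι → R, c t = 0 ∧ ∑ s, c s • k s = z := by
  obtain ⟨c, rfl⟩ := (mem_span_range_iff_exists_fun R).mp hz
  refine ⟨update c t 0, by simp, Finset.sum_congr rfl fun s _ => ?_⟩
  rcases eq_or_ne s t with rfl | h <;> simp [*]

theorem mem_span_range_update_zero_of_sum_smul_eq_zero [DivisionRing R] [AddCommGroup M]
    [Module R M] {lam : ι → R} {k : ι → M} {t : ι} (ht : lam t ≠ 0)
    (h : ∑ s, lam s • k s = 0) : k t ∈ span R (range (update k t 0)) := by
  rw [sum_smul_eq_smul_add_sum_smul_update_zero lam k t] at h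
  rw [← smul_mem_iff _ ht, eq_neg_of_add_eq_zero_left h]
  exact neg_mem (sum_mem fun s _ => smul_mem _ _ (subset_span ⟨s, rfl⟩))

end Update

section SupSpanSingleton

variable {K M : Type*} [AddCommGroup M]

theorem sup_span_singleton_add_eq_top [Field K] [Module K M] {V : Submodule K M} {x y : M}
    (hx : V ⊔ span K {x} = ⊤) (hy : V ⊔ span K {y} ≠ ⊤) : V ⊔ span K {x + y} = ⊤ := by
  have hyV : y ∈ V := by
    by_contra hyV
    refine hy (top_unique (hx ▸ sup_le le_sup_left ((span_singleton_le_iff_mem _ _).mpr ?_)))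
    have hy' : y ∈ span K (insert x (V : Set M)) := by
      rw [span_insert, span_eq, sup_comm, hx]; trivial
    simpa [span_insert, span_eq, sup_comm] using
      mem_span_insert_exchange hy' (by rwa [span_eq])
  refine top_unique (hx ▸ sup_le le_sup_left ((span_singleton_le_iff_mem _ _).mpr ?_))
  simpa using sub_mem (mem_sup_right (mem_span_singleton_self (x + y))) (mem_sup_left hyV)

theorem sup_span_singleton_add_ne_top [Module (ZMod 2) M] {V : Submodule (ZMod 2) M} {x y : M}
    (hV : V ≠ ⊤) (hx : V ⊔ span (ZMod 2) {x} = ⊤) (hy : V ⊔ span (ZMod 2) {y} = ⊤) :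
    V ⊔ span (ZMod 2) {x + y} ≠ ⊤ := by
  have hxy : x + y ∈ V := by
    obtain ⟨v, hv, w, hw, rfl⟩ := mem_sup.mp (hx ▸ mem_top : y ∈ V ⊔ span (ZMod 2) {x})
    obtain ⟨c, rfl⟩ := mem_span_singleton.mp hw
    rcases c.eq_zero_or_eq_one with rfl | rfl
    · rw [zero_smul, add_zero, sup_eq_left.mpr ((span_singleton_le_iff_mem _ _).mpr hv)] at hy
      exact absurd hy hV
    · rwa [one_smul, add_left_comm, ZModModule.add_self, add_zero]
  rwa [sup_eq_left.mpr ((span_singleton_le_iff_mem _ _).mpr hxy)]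

end SupSpanSingleton

section RelationParity

variable {ι M : Type*} [Fintype ι] [AddCommGroup M] [Module (ZMod 2) M]

def IsRelationParity (D : (ι → M) → ZMod 2) : Prop :=
  ∀ k : ι → M,
    (span (ZMod 2) (range k) = ⊤ →
      ∀ lam : ι → ZMod 2, lam ≠ 0 → ∑ t, lam t • k t = 0 → D k = 1 + ∑ t, lam t) ∧
    (span (ZMod 2) (range k) ≠ ⊤ → D k = 0)

namespace IsRelationParity

variable {D : (ι → M) → ZMod 2}

theorem apply_linearEquiv_comp [FiniteDimensional (ZMod 2) M] (hD : IsRelationParity D)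
    (hcard : finrank (ZMod 2) M < Fintype.card ι) (A : M ≃ₗ[ZMod 2] M) (k : ι → M) :
    D (fun t => A (k t)) = D k := by
  by_cases hk : span (ZMod 2) (range k) = ⊤
  · obtain ⟨lam, hlam, hsum⟩ := exists_ne_zero_sum_smul_eq_zero hcard k
    have hsumA : ∑ t, lam t • A (k t) = 0 := by simp [← map_smul, ← map_sum, hsum]
    rw [(hD _).1 ((span_range_linearEquiv_comp_eq_top_iff A k).mpr hk) lam hlam hsumA,
      (hD k).1 hk lam hlam hsum]
  · rw [(hD _).2 (mt (span_range_linearEquiv_comp_eq_top_iff A k).mp hk), (hD k).2 hk]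

variable [DecidableEq ι]

theorem apply_update_of_sum_smul_eq (hD : IsRelationParity D) {k : ι → M} {t : ι} {z : M}
    {c : ι → ZMod 2} (hct : c t = 0) (hc : ∑ s, c s • k s = z)
    (hspan : span (ZMod 2) (range (update k t z)) = ⊤) : D (update k t z) = ∑ s, c s := by
  have hrel : ∑ s, (c + Pi.single t 1 : ι → ZMod 2) s • update k t z s = 0 := by
    simp only [Pi.add_apply, add_smul, Finset.sum_add_distrib, sum_smul_update_of_eq_zero hct,
      hc]
    simp [ZModModule.add_self]
  have hne : c + Pi.single t 1 ≠ 0 := fun h => by simpa [hct] using congrFun h t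
  rw [(hD _).1 hspan _ hne hrel]
  simp only [Pi.add_apply, Finset.sum_add_distrib, Fintype.sum_pi_single']
  rw [add_comm _ (1 : ZMod 2), ← add_assoc, CharTwo.add_self_eq_zero, zero_add]

theorem apply_update_eq_apply_update [FiniteDimensional (ZMod 2) M] (hD : IsRelationParity D)
    (hcard : finrank (ZMod 2) M < Fintype.card ι) {k : ι → M} {t : ι} {x y : M}
    (hV : span (ZMod 2) (range (update k t 0)) ≠ ⊤)
    (hx : span (ZMod 2) (range (update k t x)) = ⊤)
    (hy : span (ZMod 2) (range (update k t y)) = ⊤) : D (update k t x) = D (update k t y) := by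
  obtain ⟨lam, hlam, hsum⟩ := exists_ne_zero_sum_smul_eq_zero hcard (update k t x)
  have hlamt : lam t = 0 := by
    by_contra hlamt
    have hxV := mem_span_range_update_zero_of_sum_smul_eq_zero hlamt hsum
    rw [update_idem, update_self] at hxV
    rw [span_range_update, sup_eq_left.mpr ((span_singleton_le_iff_mem _ _).mpr hxV)] at hx
    exact hV hx
  have hsumy : ∑ s, lam s • update k t y s = 0 := by
    rwa [sum_smul_update_of_eq_zero hlamt, ← sum_smul_update_of_eq_zero hlamt k x]
  rw [(hD _).1 hx lam hlam hsum, (hD _).1 hy lam hlam hsumy]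

theorem apply_update_add_of_span_eq_top (hD : IsRelationParity D) {k : ι → M} {t : ι}
    (hV : span (ZMod 2) (range (update k t 0)) = ⊤) (x y : M) :
    D (update k t (x + y)) = D (update k t x) + D (update k t y) := by
  have hspan (z : M) : span (ZMod 2) (range (update k t z)) = ⊤ := by
    rw [span_range_update, hV, top_sup_eq]
  obtain ⟨cx, hcxt, hcx⟩ :=
    exists_sum_smul_eq_of_mem_span_range_update_zero (hV ▸ mem_top : x ∈ _)
  obtain ⟨cy, hcyt, hcy⟩ :=
    exists_sum_smul_eq_of_mem_span_range_update_zero (hV ▸ mem_top : y ∈ _)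
  have hcxy : ∑ s, (cx + cy) s • k s = x + y := by
    simp only [Pi.add_apply, add_smul, Finset.sum_add_distrib, hcx, hcy]
  rw [hD.apply_update_of_sum_smul_eq (by simp [hcxt, hcyt]) hcxy (hspan _),
    hD.apply_update_of_sum_smul_eq hcxt hcx (hspan x),
    hD.apply_update_of_sum_smul_eq hcyt hcy (hspan y), ← Finset.sum_add_distrib]
  rfl

theorem apply_update_add_of_span_ne_top [FiniteDimensional (ZMod 2) M] (hD : IsRelationParity D)
    (hcard : finrank (ZMod 2) M < Fintype.card ι) {k : ι → M} {t : ι}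
    (hV : span (ZMod 2) (range (update k t 0)) ≠ ⊤) (x y : M) :
    D (update k t (x + y)) = D (update k t x) + D (update k t y) := by
  set V := span (ZMod 2) (range (update k t 0))
  have hS (z : M) : span (ZMod 2) (range (update k t z)) = V ⊔ span (ZMod 2) {z} :=
    span_range_update k t z
  have hD0 {z : M} (hz : V ⊔ span (ZMod 2) {z} ≠ ⊤) : D (update k t z) = 0 :=
    (hD _).2 (hS z ▸ hz)
  have hDeq {z w : M} (hz : V ⊔ span (ZMod 2) {z} = ⊤) (hw : V ⊔ span (ZMod 2) {w} = ⊤) :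
      D (update k t z) = D (update k t w) :=
    hD.apply_update_eq_apply_update hcard hV (hS z ▸ hz) (hS w ▸ hw)
  by_cases hx : V ⊔ span (ZMod 2) {x} = ⊤ <;> by_cases hy : V ⊔ span (ZMod 2) {y} = ⊤
  · rw [hD0 (sup_span_singleton_add_ne_top hV hx hy), hDeq hx hy, CharTwo.add_self_eq_zero]
  · rw [hD0 hy, add_zero, hDeq (sup_span_singleton_add_eq_top hx hy) hx]
  · rw [hD0 hx, zero_add, hDeq (add_comm y x ▸ sup_span_singleton_add_eq_top hy hx) hy]
  · have hxy : V ⊔ span (ZMod 2) {x + y} ≠ ⊤ := fun hxy => hx <| by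
      simpa [add_assoc, ZModModule.add_self] using sup_span_singleton_add_eq_top hxy hy
    rw [hD0 hxy, hD0 hx, hD0 hy, add_zero]

theorem apply_update_add [FiniteDimensional (ZMod 2) M] (hD : IsRelationParity D)
    (hcard : finrank (ZMod 2) M < Fintype.card ι) (k : ι → M) (t : ι) (x y : M) :
    D (update k t (x + y)) = D (update k t x) + D (update k t y) := by
  by_cases hV : span (ZMod 2) (range (update k t 0)) = ⊤
  · exact hD.apply_update_add_of_span_eq_top hV x y
  · exact hD.apply_update_add_of_span_ne_top hcard hV x y

end IsRelationParity

end RelationParity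

theorem IsRelationParity.ne_zero {m : ℕ} {D : (Fin (m + 1 + 1) → Fin (m + 1) → ZMod 2) → ZMod 2}
    (hD : IsRelationParity D) : D ≠ fun _ => 0 := by
  -- `k = (e₀, e₀, e₁, …, e_m)` spans, and its relation `k₀ + k₁ = 0` has even weight.
  let e : Fin (m + 1) → Fin (m + 1) → ZMod 2 := fun i => Pi.single i 1
  let k : Fin (m + 1 + 1) → Fin (m + 1) → ZMod 2 := Fin.cons (e 0) e
  have hk : span (ZMod 2) (range k) = ⊤ := by
    rw [Fin.range_cons, eq_top_iff, ← (Pi.basisFun (ZMod 2) (Fin (m + 1))).span_eq]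
    refine span_mono ?_
    rintro _ ⟨i, rfl⟩
    exact subset_insert _ _ ⟨i, by simp [e]⟩
  let lam : Fin (m + 1 + 1) → ZMod 2 := Pi.single 0 1 + Pi.single 1 1
  have hlam : lam ≠ 0 := fun h => by simpa [lam] using congrFun h 0
  have hsum : ∑ t, lam t • k t = 0 := by
    simp [lam, k, add_smul, Finset.sum_add_distrib, ZModModule.add_self]
  intro hD0
  simpa [hD0, lam, Finset.sum_add_distrib, CharTwo.add_self_eq_zero] using
    (hD k).1 hk lam hlam hsum

/-- If `k₁, …, k_{n+1}` span `L = 𝔽₂ⁿ`, then the kernel of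
`(λ₁, …, λ_{n+1}) ↦ λ₁k₁ + ⋯ + λ_{n+1}k_{n+1}` contains exactly one nonzero element `λ`.
Any function `D₁ : L^{n+1} → 𝔽₂` with `D₁(k₁, …, k_{n+1}) = 1 + λ₁ + ⋯ + λ_{n+1}` when the
`k_t` span `L` (`λ` the unique nonzero kernel element) and `D₁ = 0` otherwise is
GL-invariant, rank-vanishing, multilinear and not identically zero. -/
theorem stmt8 (n : ℕ) (hn : 1 ≤ n) :
    (∀ k : Fin (n + 1) → Fin n → ZMod 2,
      Submodule.span (ZMod 2) (Set.range k) = ⊤ →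
      ∃! lam : Fin (n + 1) → ZMod 2, lam ≠ 0 ∧ ∑ t, lam t • k t = 0) ∧
    ∀ D₁ : (Fin (n + 1) → Fin n → ZMod 2) → ZMod 2,
      (∀ k : Fin (n + 1) → Fin n → ZMod 2,
        (Submodule.span (ZMod 2) (Set.range k) = ⊤ →
          ∀ lam : Fin (n + 1) → ZMod 2, lam ≠ 0 → ∑ t, lam t • k t = 0 →
            D₁ k = 1 + ∑ t, lam t) ∧
        (Submodule.span (ZMod 2) (Set.range k) ≠ ⊤ → D₁ k = 0)) →
      GLInvariant n D₁ ∧ RankVanishing n D₁ ∧ Multilinear n D₁ ∧ D₁ ≠ fun _ => 0 := by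
  obtain ⟨m, rfl⟩ := Nat.exists_eq_add_of_le' hn
  have hcard : finrank (ZMod 2) (Fin (m + 1) → ZMod 2) < Fintype.card (Fin (m + 1 + 1)) := by
    simp
  refine ⟨fun k hk => existsUnique_ne_zero_sum_smul_eq_zero hk (by simp), fun D₁ hD => ?_⟩
  have hD : IsRelationParity D₁ := hD
  exact ⟨hD.apply_linearEquiv_comp hcard, fun k => (hD k).2,
    fun t k => hD.apply_update_add hcard k t, hD.ne_zero⟩
end

section
/- Fix n ≥ 1 and let L = (ZMod 2)^n. Define D₂ : L^{n+1} → 𝔽₂ by D₂(k₁, …, k_{n+1}) := Σ_{1 ≤ i < j ≤ n+1} Δ_{ij}, where Δ_{ij} is the determinant over 𝔽₂ of the n×n matrix whose first n−1 columns are the vectors k₁, …, k_{n+1} with k_i and k_j omitted (in increasing order of index) and whose last column is the coordinatewise product of k_i and k_j. Then D₂ is GL-invariant, rank-vanishing, multilinear, and not identically zero. -/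
/-- For `i < j` in `{0, …, n}`, the `t`-th element (in increasing order) of
`{0, …, n} \ {i, j}`. -/
def omitTwo {n : ℕ} (i j : Fin (n + 1)) (t : Fin (n - 1)) : Fin (n + 1) :=
  if (t : ℕ) < (i : ℕ) then ⟨t, by omega⟩
  else if (t : ℕ) + 1 < (j : ℕ) then ⟨(t : ℕ) + 1, by have := t.isLt; omega⟩
  else ⟨(t : ℕ) + 2, by have := t.isLt; omega⟩

/-- `Δ_{ij}`: the determinant over `𝔽₂` of the `n × n` matrix whose first `n - 1` columns are
`k₁, …, k_{n+1}` with `k_i`, `k_j` omitted (in increasing order of index) and whose last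
column is the coordinatewise product of `k_i` and `k_j`. -/
def DeltaIJ (n : ℕ) (k : Fin (n + 1) → Fin n → ZMod 2) (i j : Fin (n + 1)) : ZMod 2 :=
  Matrix.det (Matrix.of fun r c : Fin n =>
    if h : (c : ℕ) < n - 1 then k (omitTwo i j ⟨c, h⟩) r else k i r * k j r)

/-- `D₂(k₁, …, k_{n+1}) = ∑_{i < j} Δ_{ij}`. -/
def D₂ (n : ℕ) (k : Fin (n + 1) → Fin n → ZMod 2) : ZMod 2 :=
  ∑ p ∈ Finset.univ.filter (fun p : Fin (n + 1) × Fin (n + 1) => p.1 < p.2),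
    DeltaIJ n k p.1 p.2

open Matrix

lemma Fin.val_succAbove {n : ℕ} (p : Fin (n + 1)) (t : Fin n) :
    (p.succAbove t : ℕ) = if (t : ℕ) < p then (t : ℕ) else (t : ℕ) + 1 := by
  unfold Fin.succAbove; split_ifs <;> simp_all [Fin.lt_def]

open Finset in
lemma Fin.sum_filter_lt_add_swap {M : Type*} [AddCommMonoid M] {n : ℕ}
    (f : Fin (n + 1) → Fin (n + 1) → M) :
    ∑ p ∈ univ.filter (fun p : Fin (n + 1) × Fin (n + 1) => p.1 < p.2), (f p.1 p.2 + f p.2 p.1) =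
      ∑ i, ∑ s, f i (i.succAbove s) := by
  have hswap : ∑ p ∈ univ.filter (fun p : Fin (n + 1) × Fin (n + 1) => p.1 < p.2), f p.2 p.1 =
      ∑ p ∈ univ.filter (fun p : Fin (n + 1) × Fin (n + 1) => p.2 < p.1), f p.1 p.2 :=
    sum_equiv (Equiv.prodComm _ _) (by simp) (by simp)
  have hne : ∀ i, ∑ s, f i (i.succAbove s) = ∑ j, if i ≠ j then f i j else 0 := fun i => by
    simp [Fin.sum_univ_succAbove _ i]
  rw [sum_add_distrib, hswap, ← sum_union (disjoint_filter.2 fun p _ h h' => lt_asymm h h'),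
    ← filter_or]
  simp_rw [hne, ← Fintype.sum_prod_type', ← sum_filter, lt_or_lt_iff_ne]

lemma ZMod.eq_one_of_ne_zero_two {x : ZMod 2} (hx : x ≠ 0) : x = 1 := by
  revert x; decide

namespace Matrix

variable {R : Type*} [CommRing R]

lemma det_of_mulVec {ι : Type*} [Fintype ι] [DecidableEq ι] (N A : Matrix ι ι R) :
    (of fun r => N *ᵥ A r).det = N.det * A.det := by
  have : (of fun r => N *ᵥ A r) = A * Nᵀ := by
    ext r c
    simp [mul_apply, mulVec, dotProduct, mul_comm]
  rw [this, det_mul, det_transpose, mul_comm]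

-- Expanding along the last row, resp. row `s`, gives the same Laplace sum up to signs,
-- which are trivial in characteristic 2.
lemma det_of_snoc_comp_succAbove [CharP R 2] {m : ℕ} (A : Matrix (Fin (m + 1)) (Fin (m + 1)) R)
    (s : Fin (m + 1)) (z : Fin (m + 1) → R) :
    (of (Fin.snoc (A ∘ s.succAbove) z)).det = (A.updateRow s z).det := by
  have hsign : ∀ e : ℕ, (-1 : R) ^ e = 1 := fun e => by rw [CharTwo.neg_eq, one_pow]
  rw [det_succ_row _ (Fin.last m), det_succ_row _ s]
  refine Finset.sum_congr rfl fun c _ => ?_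
  simp only [hsign, one_mul, of_apply, Fin.snoc_last, updateRow_self]
  rw [submatrix_updateRow_succAbove]
  congr 2
  ext r c
  simp only [submatrix_apply, of_apply, Fin.succAbove_last, Fin.snoc_castSucc]
  rfl

lemma sum_mul_det_updateRow {ι : Type*} [Fintype ι] [DecidableEq ι] (A : Matrix ι ι R)
    (z : ι → R) (b : ι) : ∑ s, A s b * (A.updateRow s z).det = z b * A.det := by
  have := congrFun (mulVec_cramer Aᵀ z) b
  simp only [mulVec, dotProduct, cramer_transpose_apply, transpose_apply, Pi.smul_apply,
    smul_eq_mul, det_transpose] at this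
  rw [this, mul_comm]

lemma transvection_mulVec {ι : Type*} [Fintype ι] [DecidableEq ι] (a b : ι) (c : R)
    (v : ι → R) : transvection a b c *ᵥ v = v + Pi.single a (c * v b) := by
  rw [transvection, add_mulVec, one_mulVec, single_mulVec]
  rfl

lemma transvection_mulVec_mul_mulVec {ι : Type*} [Fintype ι] [DecidableEq ι] {a b : ι}
    (hab : a ≠ b) (c : ZMod 2) (u v : ι → ZMod 2) :
    (transvection a b c *ᵥ u) * (transvection a b c *ᵥ v) =
      transvection a b c *ᵥ (u * v + Pi.single a (c * (u a * v b + u b * v a))) := by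
  have hc : c * c = c := by revert c; decide
  ext r
  rcases eq_or_ne r a with rfl | hr
  · simp only [transvection_mulVec, Pi.mul_apply, Pi.add_apply, Pi.single_eq_same,
      Pi.single_eq_of_ne hab.symm, add_zero]
    linear_combination (u b * v b) * hc
  · simp [transvection_mulVec, Pi.single_apply, hr]

end Matrix

lemma exists_linearEquiv_apply_eq {ι : Type*} [Fintype ι] [DecidableEq ι]
    (f : Module.Dual (ZMod 2) (ι → ZMod 2)) (hf : f ≠ 0) :
    ∃ (A : (ι → ZMod 2) ≃ₗ[ZMod 2] (ι → ZMod 2)) (c : ι), ∀ v, A v c = f v := by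
  obtain ⟨c, hc⟩ : ∃ c, f (Pi.single c 1) ≠ 0 := by
    by_contra! h
    exact hf (LinearMap.pi_ext' fun c => LinearMap.ext_ring (h c))
  have hc1 := ZMod.eq_one_of_ne_zero_two hc
  let B : (ι → ZMod 2) →ₗ[ZMod 2] (ι → ZMod 2) :=
    LinearMap.id + (LinearMap.smulRight (f + LinearMap.proj c) (Pi.single c 1))
  have hB : ∀ v, B v = v + (f v + v c) • Pi.single c 1 := fun v => rfl
  have hBc : ∀ v, B v c = f v := fun v => by
    simp only [hB, Pi.add_apply, Pi.smul_apply, Pi.single_eq_same, smul_eq_mul, mul_one]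
    ring_nf
    reduce_mod_char
  refine ⟨LinearEquiv.ofInvolutive B fun v => ?_, c, hBc⟩
  ext r
  rw [hB, hBc, hB]
  simp only [Pi.add_apply, Pi.smul_apply, smul_eq_mul, map_add, map_smul, hc1, mul_one]
  ring_nf
  reduce_mod_char

section omitTwo

variable {m : ℕ} {i j : Fin (m + 2)}

lemma val_omitTwo (i j : Fin (m + 2)) (t : Fin m) :
    (omitTwo i j t : ℕ) =
      if (t : ℕ) < i then (t : ℕ) else if (t : ℕ) + 1 < j then (t : ℕ) + 1 else (t : ℕ) + 2 := by
  unfold omitTwo; split_ifs <;> rfl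

lemma omitTwo_strictMono (i j : Fin (m + 2)) : StrictMono (omitTwo i j : Fin m → Fin (m + 2)) := by
  intro s t hst
  rw [Fin.lt_def] at hst ⊢
  rw [val_omitTwo, val_omitTwo]
  split_ifs <;> omega

lemma mem_range_omitTwo (hij : i < j) {u : Fin (m + 2)} :
    u ∈ Set.range (omitTwo i j) ↔ u ≠ i ∧ u ≠ j := by
  rw [Fin.lt_def] at hij
  simp only [Set.mem_range, ne_eq, Fin.ext_iff, val_omitTwo]
  constructor
  · rintro ⟨t, ht⟩
    split_ifs at ht <;> omega
  · rintro ⟨hui, huj⟩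
    have := u.isLt
    by_cases h1 : (u : ℕ) < i
    · exact ⟨⟨u, by omega⟩, if_pos h1⟩
    by_cases h2 : (u : ℕ) < j
    · exact ⟨⟨u - 1, by omega⟩, by simp only; split_ifs <;> omega⟩
    · exact ⟨⟨u - 2, by omega⟩, by simp only; split_ifs <;> omega⟩

lemma omitTwo_ne_left (hij : i < j) (t : Fin m) : omitTwo i j t ≠ i :=
  ((mem_range_omitTwo hij).1 ⟨t, rfl⟩).1

lemma omitTwo_ne_right (hij : i < j) (t : Fin m) : omitTwo i j t ≠ j :=
  ((mem_range_omitTwo hij).1 ⟨t, rfl⟩).2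

lemma succAbove_comp_succAbove_eq_omitTwo (i : Fin (m + 2)) (s : Fin (m + 1)) :
    i.succAbove ∘ s.succAbove = omitTwo (min i (i.succAbove s)) (max i (i.succAbove s)) := by
  funext t
  have h := (Fin.succAbove_ne i s).lt_or_gt
  rw [Fin.lt_def, Fin.lt_def, Fin.val_succAbove] at h
  rcases h with h | h
  · rw [min_eq_right (Fin.le_def.2 (by rw [Fin.val_succAbove]; omega)),
      max_eq_left (Fin.le_def.2 (by rw [Fin.val_succAbove]; omega))]
    simp only [Function.comp_apply, Fin.ext_iff, val_omitTwo, Fin.val_succAbove]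
    split_ifs at h ⊢ <;> omega
  · rw [min_eq_left (Fin.le_def.2 (by rw [Fin.val_succAbove]; omega)),
      max_eq_right (Fin.le_def.2 (by rw [Fin.val_succAbove]; omega))]
    simp only [Function.comp_apply, Fin.ext_iff, val_omitTwo, Fin.val_succAbove]
    split_ifs at h ⊢ <;> omega

end omitTwo

section deltaMatrix

variable {m : ℕ} (k : Fin (m + 2) → Fin (m + 1) → ZMod 2) {i j : Fin (m + 2)}

def deltaMatrix (i j : Fin (m + 2)) : Matrix (Fin (m + 1)) (Fin (m + 1)) (ZMod 2) :=
  of (Fin.snoc (k ∘ omitTwo i j) (k i * k j))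

@[simp]
lemma deltaMatrix_castSucc (i j : Fin (m + 2)) (r : Fin m) :
    deltaMatrix k i j r.castSucc = k (omitTwo i j r) :=
  funext fun _ => by simp [deltaMatrix]

@[simp]
lemma deltaMatrix_last (i j : Fin (m + 2)) : deltaMatrix k i j (Fin.last m) = k i * k j :=
  funext fun _ => by simp [deltaMatrix]

lemma deltaIJ_eq_det (i j : Fin (m + 2)) : DeltaIJ (m + 1) k i j = (deltaMatrix k i j).det := by
  rw [DeltaIJ, ← det_transpose]
  congr 1
  ext c r
  refine Fin.lastCases ?_ (fun c => ?_) c <;> simp [deltaMatrix]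

lemma deltaMatrix_update_left (hij : i < j) (x : Fin (m + 1) → ZMod 2) :
    deltaMatrix (Function.update k i x) i j =
      (deltaMatrix k i j).updateRow (Fin.last m) (x * k j) := by
  ext r c
  refine Fin.lastCases ?_ (fun r => ?_) r <;>
    simp [updateRow_apply, hij.ne', omitTwo_ne_left hij, (Fin.castSucc_lt_last _).ne]

lemma deltaMatrix_update_right (hij : i < j) (x : Fin (m + 1) → ZMod 2) :
    deltaMatrix (Function.update k j x) i j =
      (deltaMatrix k i j).updateRow (Fin.last m) (k i * x) := by
  ext r c
  refine Fin.lastCases ?_ (fun r => ?_) r <;>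
    simp [updateRow_apply, hij.ne, omitTwo_ne_right hij, (Fin.castSucc_lt_last _).ne]

lemma deltaMatrix_update_omitTwo (hij : i < j) (c : Fin m) (x : Fin (m + 1) → ZMod 2) :
    deltaMatrix (Function.update k (omitTwo i j c) x) i j =
      (deltaMatrix k i j).updateRow c.castSucc x := by
  ext r c'
  refine Fin.lastCases ?_ (fun r => ?_) r
  · simp [updateRow_apply, (omitTwo_ne_left hij c).symm, (omitTwo_ne_right hij c).symm,
      (Fin.castSucc_lt_last c).ne']
  · by_cases hr : r = c
    · simp [hr]
    · simp [updateRow_apply, hr, (omitTwo_strictMono i j).injective.ne hr]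

lemma deltaIJ_update_add (hij : i < j) (t : Fin (m + 2)) (x y : Fin (m + 1) → ZMod 2) :
    DeltaIJ (m + 1) (Function.update k t (x + y)) i j =
      DeltaIJ (m + 1) (Function.update k t x) i j + DeltaIJ (m + 1) (Function.update k t y) i j := by
  simp only [deltaIJ_eq_det]
  by_cases hti : t = i
  · subst hti
    simp only [deltaMatrix_update_left k hij, add_mul, det_updateRow_add]
  by_cases htj : t = j
  · subst htj
    simp only [deltaMatrix_update_right k hij, mul_add, det_updateRow_add]
  obtain ⟨c, rfl⟩ := (mem_range_omitTwo hij).2 ⟨hti, htj⟩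
  simp only [deltaMatrix_update_omitTwo k hij, det_updateRow_add]

theorem multilinear_D₂ : Multilinear (m + 1) (D₂ (m + 1)) := fun t k x y => by
  simp only [D₂, ← Finset.sum_add_distrib]
  exact Finset.sum_congr rfl fun p hp => deltaIJ_update_add k (Finset.mem_filter.1 hp).2 t x y

lemma D₂_eq_zero_of_apply_eq_zero (c : Fin (m + 1)) (h : ∀ t, k t c = 0) : D₂ (m + 1) k = 0 :=
  Finset.sum_eq_zero fun p _ => by
    rw [deltaIJ_eq_det]
    refine det_eq_zero_of_column_eq_zero c fun r => ?_
    refine Fin.lastCases ?_ (fun r => ?_) r <;> simp [h]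

end deltaMatrix

section transvection

variable {m : ℕ} {a b : Fin (m + 1)} (c : ZMod 2) (k : Fin (m + 2) → Fin (m + 1) → ZMod 2)

lemma deltaMatrix_transvection (hab : a ≠ b) (i j : Fin (m + 2)) :
    deltaMatrix (fun t => transvection a b c *ᵥ k t) i j =
      of fun r => transvection a b c *ᵥ (deltaMatrix k i j).updateRow (Fin.last m)
        (k i * k j + Pi.single a (c * (k i a * k j b + k i b * k j a))) r := by
  ext r x
  refine Fin.lastCases ?_ (fun r => ?_) r
  · simpa using congrFun (transvection_mulVec_mul_mulVec hab c (k i) (k j)) x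
  · simp [(Fin.castSucc_lt_last _).ne]

lemma deltaIJ_transvection (hab : a ≠ b) (i j : Fin (m + 2)) :
    DeltaIJ (m + 1) (fun t => transvection a b c *ᵥ k t) i j =
      DeltaIJ (m + 1) k i j + c * (k i a * k j b + k i b * k j a) *
        ((deltaMatrix k i j).updateRow (Fin.last m) (Pi.single a 1)).det := by
  rw [deltaIJ_eq_det, deltaIJ_eq_det, deltaMatrix_transvection c k hab, det_of_mulVec,
    det_transvection_of_ne _ _ hab, one_mul, det_updateRow_add, ← deltaMatrix_last,
    updateRow_eq_self, ← det_updateRow_smul, ← Pi.single_smul', smul_eq_mul, mul_one]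

lemma det_updateRow_deltaMatrix_min_max (i : Fin (m + 2)) (s : Fin (m + 1))
    (z : Fin (m + 1) → ZMod 2) :
    ((deltaMatrix k (min i (i.succAbove s)) (max i (i.succAbove s))).updateRow
      (Fin.last m) z).det = ((of (k ∘ i.succAbove)).updateRow s z).det := by
  rw [← det_of_snoc_comp_succAbove (of (k ∘ i.succAbove)) s z]
  congr 1
  ext r x
  refine Fin.lastCases ?_ (fun r => ?_) r
  · simp
  · simp only [updateRow_ne (Fin.castSucc_lt_last _).ne, deltaMatrix_castSucc,
      ← succAbove_comp_succAbove_eq_omitTwo, Function.comp_apply, of_apply, Fin.snoc_castSucc]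
    rfl

open Finset in
lemma sum_mul_det_updateRow_deltaMatrix (hab : a ≠ b) :
    ∑ p ∈ univ.filter (fun p : Fin (m + 2) × Fin (m + 2) => p.1 < p.2),
      (k p.1 a * k p.2 b + k p.1 b * k p.2 a) *
        ((deltaMatrix k p.1 p.2).updateRow (Fin.last m) (Pi.single a 1)).det = 0 := by
  set μ : Fin (m + 2) → Fin (m + 2) → ZMod 2 := fun i j =>
    ((deltaMatrix k (min i j) (max i j)).updateRow (Fin.last m) (Pi.single a 1)).det
  set g : Fin (m + 2) → Fin (m + 2) → ZMod 2 := fun i j => k i a * (k j b * μ i j)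
  have hsymm : ∀ p ∈ univ.filter (fun p : Fin (m + 2) × Fin (m + 2) => p.1 < p.2),
      (k p.1 a * k p.2 b + k p.1 b * k p.2 a) *
        ((deltaMatrix k p.1 p.2).updateRow (Fin.last m) (Pi.single a 1)).det =
        g p.1 p.2 + g p.2 p.1 := by
    intro p hp
    have hle := (mem_filter.1 hp).2.le
    simp only [g, μ, min_eq_left hle, max_eq_right hle, min_eq_right hle, max_eq_left hle]
    ring
  have hcramer : ∀ i, ∑ s, k (i.succAbove s) b * μ i (i.succAbove s) = 0 := fun i => by
    simpa [μ, det_updateRow_deltaMatrix_min_max, hab.symm] using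
      sum_mul_det_updateRow (of (k ∘ i.succAbove)) (Pi.single a 1) b
  rw [sum_congr rfl hsymm, Fin.sum_filter_lt_add_swap]
  exact sum_eq_zero fun i _ => by simp only [g, ← mul_sum, hcramer, mul_zero]

lemma D₂_transvection (hab : a ≠ b) : D₂ (m + 1) (fun t => transvection a b c *ᵥ k t) = D₂ (m + 1) k := by
  simp only [D₂, deltaIJ_transvection c k hab, Finset.sum_add_distrib, mul_assoc, ← Finset.mul_sum,
    sum_mul_det_updateRow_deltaMatrix k hab, mul_zero, add_zero]

end transvection

theorem glInvariant_D₂ (m : ℕ) : GLInvariant (m + 1) (D₂ (m + 1)) := by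
  intro A k
  have hA : ∀ v, A v = LinearMap.toMatrix' A.toLinearMap *ᵥ v := fun v =>
    (LinearMap.toMatrix'_mulVec A.toLinearMap v).symm
  simp only [hA]
  refine diagonal_transvection_induction_of_det_ne_zero
    (fun N => ∀ k, D₂ (m + 1) (fun t => N *ᵥ k t) = D₂ (m + 1) k) _ ?_ ?_ ?_ ?_ k
  · rw [LinearMap.det_toMatrix']
    exact A.isUnit_det'.ne_zero
  · intro D hD k
    have hD1 : diagonal D = 1 := by
      rw [det_diagonal, Finset.prod_ne_zero_iff] at hD
      rw [← diagonal_one]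
      exact congrArg diagonal (funext fun r => ZMod.eq_one_of_ne_zero_two (hD r (Finset.mem_univ r)))
    simp only [hD1, one_mulVec]
  · rintro ⟨a, b, hab, c⟩ k
    exact D₂_transvection c k hab
  · intro P Q _ _ hP hQ k
    simp only [← mulVec_mulVec, hP _, hQ k]

theorem rankVanishing_D₂ (m : ℕ) : RankVanishing (m + 1) (D₂ (m + 1)) := by
  intro k hk
  obtain ⟨f, hf, hle⟩ :=
    (Submodule.span (ZMod 2) (Set.range k)).exists_le_ker_of_lt_top (lt_top_iff_ne_top.2 hk)
  obtain ⟨A, c, hA⟩ := exists_linearEquiv_apply_eq f hf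
  rw [← glInvariant_D₂ m A k]
  exact D₂_eq_zero_of_apply_eq_zero _ c fun t => (hA _).trans (hle (Submodule.subset_span ⟨t, rfl⟩))

section clampBasis

variable {m : ℕ}

def clampBasis (m : ℕ) : Fin (m + 2) → Fin (m + 1) → ZMod 2 := fun t => Pi.single (Fin.clamp t m) 1

lemma deltaMatrix_clampBasis :
    deltaMatrix (clampBasis m) (Fin.last m).castSucc (Fin.last (m + 1)) = 1 := by
  have hone : ∀ r, (1 : Matrix (Fin (m + 1)) (Fin (m + 1)) (ZMod 2)) r = Pi.single r 1 :=
    fun r => funext fun x => one_eq_pi_single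
  funext r
  refine Fin.lastCases ?_ (fun r => ?_) r
  · rw [deltaMatrix_last, hone, clampBasis, clampBasis, Fin.clamp_eq_last _ _ (by simp),
      Fin.clamp_eq_last _ _ (by simp), ← Pi.single_mul, mul_one]
  · rw [deltaMatrix_castSucc, hone, clampBasis]
    congr 1
    ext
    simp [val_omitTwo, Fin.clamp]

lemma clampBasis_mul_eq_zero {i j : Fin (m + 2)} (hij : i < j)
    (hne : (i, j) ≠ ((Fin.last m).castSucc, Fin.last (m + 1))) :
    clampBasis m i * clampBasis m j = 0 := by
  have hclamp : Fin.clamp i m ≠ Fin.clamp j m := by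
    simp only [ne_eq, Prod.ext_iff, Fin.ext_iff, Fin.val_castSucc, Fin.val_last] at hne
    rw [Fin.lt_def] at hij
    simp only [ne_eq, Fin.ext_iff, Fin.clamp]
    omega
  ext r
  by_cases hr : r = Fin.clamp i m
  · simp [clampBasis, hr, hclamp]
  · simp [clampBasis, hr]

lemma D₂_clampBasis : D₂ (m + 1) (clampBasis m) = 1 := by
  rw [D₂, Finset.sum_eq_single ((Fin.last m).castSucc, Fin.last (m + 1))]
  · rw [deltaIJ_eq_det, deltaMatrix_clampBasis, det_one]
  · intro p hp hne
    rw [deltaIJ_eq_det]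
    exact det_eq_zero_of_row_eq_zero (Fin.last m) fun x => by
      rw [deltaMatrix_last, clampBasis_mul_eq_zero (Finset.mem_filter.1 hp).2 hne]
      rfl
  · simp [Fin.castSucc_lt_last]

end clampBasis

/-- The function `D₂` is GL-invariant, rank-vanishing, multilinear and not
identically zero. -/
theorem stmt9 (n : ℕ) (hn : 1 ≤ n) :
    GLInvariant n (D₂ n) ∧ RankVanishing n (D₂ n) ∧ Multilinear n (D₂ n) ∧
      D₂ n ≠ fun _ => 0 := by
  obtain ⟨m, rfl⟩ : ∃ m, n = m + 1 := ⟨n - 1, by omega⟩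
  refine ⟨glInvariant_D₂ m, rankVanishing_D₂ m, multilinear_D₂, fun h => ?_⟩
  simpa [h] using D₂_clampBasis (m := m)
end

section
/- Let P, Q ∈ ℂ[X] have exact degrees d₁ and d₂ (i.e. nonzero leading coefficients in these degrees). Then the Sylvester resultant Res(P,Q) equals 0 if and only if P and Q have a common root in ℂ. -/
open Polynomial

/-- The `(d₂ + d₁) × (d₂ + d₁)` Sylvester matrix of two coefficient sequences `p` (of a
polynomial of degree `d₁`) and `q` (of a polynomial of degree `d₂`): the first `d₂` rows are
the successively shifted rows `(p d₁, p (d₁-1), …, p 0, 0, …, 0)` and the last `d₁` rows are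
the successively shifted rows `(q d₂, q (d₂-1), …, q 0, 0, …, 0)`. -/
def sylvesterMatrix {R : Type*} [Semiring R] (d₁ d₂ : ℕ) (p q : ℕ → R) :
    Matrix (Fin (d₂ + d₁)) (Fin (d₂ + d₁)) R :=
  Matrix.of fun i j =>
    if (i : ℕ) < d₂ then
      (if (i : ℕ) ≤ (j : ℕ) ∧ (j : ℕ) ≤ (i : ℕ) + d₁ then p (d₁ + (i : ℕ) - (j : ℕ)) else 0)
    else
      (if (i : ℕ) - d₂ ≤ (j : ℕ) ∧ (j : ℕ) ≤ ((i : ℕ) - d₂) + d₂ then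
        q (d₂ + ((i : ℕ) - d₂) - (j : ℕ)) else 0)

noncomputable def Ap (d₁ d₂ : ℕ) (v : Fin (d₂ + d₁) → ℂ) : ℂ[X] :=
  ∑ i : Fin (d₂ + d₁), if (i : ℕ) < d₂ then C (v i) * X ^ (d₂ - 1 - (i : ℕ)) else 0

noncomputable def Bp (d₁ d₂ : ℕ) (v : Fin (d₂ + d₁) → ℂ) : ℂ[X] :=
  ∑ i : Fin (d₂ + d₁), if d₂ ≤ (i : ℕ) then C (v i) * X ^ (d₁ - 1 - ((i : ℕ) - d₂)) else 0

lemma key (d₁ d₂ : ℕ) (P Q : ℂ[X]) (hP : P.natDegree ≤ d₁) (hQ : Q.natDegree ≤ d₂)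
    (v : Fin (d₂ + d₁) → ℂ) (j : Fin (d₂ + d₁)) :
    ((sylvesterMatrix d₁ d₂ (fun t => P.coeff t) (fun t => Q.coeff t)).transpose.mulVec v) j
      = (Ap d₁ d₂ v * P + Bp d₁ d₂ v * Q).coeff (d₂ + d₁ - 1 - (j : ℕ)) := by
  have hj : (j : ℕ) < d₂ + d₁ := j.isLt
  simp only [Matrix.mulVec, dotProduct, Matrix.transpose_apply]
  rw [Ap, Bp, Finset.sum_mul, Finset.sum_mul, ← Finset.sum_add_distrib, finset_sum_coeff]
  refine Finset.sum_congr rfl fun i _ => ?_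
  have hi : (i : ℕ) < d₂ + d₁ := i.isLt
  simp only [sylvesterMatrix, Matrix.of_apply]
  by_cases h1 : (i : ℕ) < d₂
  · simp only [if_pos h1, if_neg (by omega : ¬ d₂ ≤ (i:ℕ)), zero_mul, coeff_add,
      coeff_zero, add_zero]
    rw [mul_comm (C (v i)) (X ^ _), mul_assoc, mul_comm (X ^ _), coeff_mul_X_pow']
    simp only [coeff_C_mul]
    by_cases h2 : (j : ℕ) ≤ (i : ℕ) + d₁
    · rw [if_pos (by omega : d₂ - 1 - (i:ℕ) ≤ d₂ + d₁ - 1 - (j:ℕ))]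
      have he : d₂ + d₁ - 1 - (j:ℕ) - (d₂ - 1 - (i:ℕ)) = d₁ + (i:ℕ) - (j:ℕ) := by omega
      rw [he]
      by_cases h3 : (i : ℕ) ≤ (j : ℕ)
      · rw [if_pos ⟨h3, h2⟩, mul_comm]
      · rw [if_neg (by tauto), zero_mul]
        rw [coeff_eq_zero_of_natDegree_lt (by omega : P.natDegree < d₁ + (i:ℕ) - (j:ℕ)),
          mul_zero]
    · rw [if_neg (by omega), if_neg (by omega), zero_mul]
  · simp only [if_neg h1, if_pos (by omega : d₂ ≤ (i:ℕ)), zero_mul, coeff_add,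
      coeff_zero, zero_add]
    rw [mul_comm (C (v i)) (X ^ _), mul_assoc, mul_comm (X ^ _), coeff_mul_X_pow']
    simp only [coeff_C_mul]
    by_cases h2 : (j : ℕ) ≤ ((i : ℕ) - d₂) + d₂
    · rw [if_pos (by omega : d₁ - 1 - ((i:ℕ) - d₂) ≤ d₂ + d₁ - 1 - (j:ℕ))]
      have he : d₂ + d₁ - 1 - (j:ℕ) - (d₁ - 1 - ((i:ℕ) - d₂)) = d₂ + ((i:ℕ) - d₂) - (j:ℕ) := by
        omega
      rw [he]
      by_cases h3 : (i : ℕ) - d₂ ≤ (j : ℕ)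
      · rw [if_pos ⟨h3, h2⟩, mul_comm]
      · rw [if_neg (by tauto), zero_mul]
        rw [coeff_eq_zero_of_natDegree_lt
          (by omega : Q.natDegree < d₂ + ((i:ℕ) - d₂) - (j:ℕ)), mul_zero]
    · rw [if_neg (by omega), if_neg (by omega), zero_mul]

lemma Ap_degree (d₁ d₂ : ℕ) (v : Fin (d₂ + d₁) → ℂ) : (Ap d₁ d₂ v).degree < (d₂ : ℕ) := by
  refine lt_of_le_of_lt (degree_sum_le _ _) ?_
  rw [Finset.sup_lt_iff (by exact_mod_cast WithBot.bot_lt_coe d₂)]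
  intro i _
  split_ifs with h
  · exact lt_of_le_of_lt (degree_C_mul_X_pow_le _ _)
      (by exact_mod_cast (by omega : d₂ - 1 - (i : ℕ) < d₂))
  · rw [degree_zero]; exact_mod_cast WithBot.bot_lt_coe d₂

lemma Bp_degree (d₁ d₂ : ℕ) (v : Fin (d₂ + d₁) → ℂ) : (Bp d₁ d₂ v).degree < (d₁ : ℕ) := by
  refine lt_of_le_of_lt (degree_sum_le _ _) ?_
  rw [Finset.sup_lt_iff (by exact_mod_cast WithBot.bot_lt_coe d₁)]
  intro i _
  split_ifs with h
  · have hi : (i : ℕ) < d₂ + d₁ := i.isLt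
    exact lt_of_le_of_lt (degree_C_mul_X_pow_le _ _)
      (by exact_mod_cast (by omega : d₁ - 1 - ((i : ℕ) - d₂) < d₁))
  · rw [degree_zero]; exact_mod_cast WithBot.bot_lt_coe d₁

lemma Ap_coeff (d₁ d₂ : ℕ) (v : Fin (d₂ + d₁) → ℂ) (i : Fin (d₂ + d₁)) (h : (i : ℕ) < d₂) :
    (Ap d₁ d₂ v).coeff (d₂ - 1 - (i : ℕ)) = v i := by
  rw [Ap, finset_sum_coeff, Finset.sum_eq_single i]
  · rw [if_pos h]
    simp [coeff_C_mul, coeff_X_pow]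
  · intro b _ hb
    split_ifs with hb2
    · have hne : d₂ - 1 - (b : ℕ) ≠ d₂ - 1 - (i : ℕ) := by
        have : (b : ℕ) ≠ (i : ℕ) := fun hc => hb (Fin.ext hc)
        omega
      simp [coeff_C_mul, coeff_X_pow, hne, Ne.symm hne]
    · simp
  · simp

lemma Bp_coeff (d₁ d₂ : ℕ) (v : Fin (d₂ + d₁) → ℂ) (i : Fin (d₂ + d₁)) (h : d₂ ≤ (i : ℕ)) :
    (Bp d₁ d₂ v).coeff (d₁ - 1 - ((i : ℕ) - d₂)) = v i := by
  have hi : (i : ℕ) < d₂ + d₁ := i.isLt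
  rw [Bp, finset_sum_coeff, Finset.sum_eq_single i]
  · rw [if_pos h]
    simp [coeff_C_mul, coeff_X_pow]
  · intro b _ hb
    split_ifs with hb2
    · have hb' : (b : ℕ) < d₂ + d₁ := b.isLt
      have hne : d₁ - 1 - ((b : ℕ) - d₂) ≠ d₁ - 1 - ((i : ℕ) - d₂) := by
        have : (b : ℕ) ≠ (i : ℕ) := fun hc => hb (Fin.ext hc)
        omega
      simp [coeff_C_mul, coeff_X_pow, hne, Ne.symm hne]
    · simp
  · simp

lemma Ap_eq (d₁ d₂ : ℕ) (w : ℕ → ℂ) (Q₁ : ℂ[X]) (hd : Q₁.natDegree < d₂)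
    (hw : ∀ k, k < d₂ → w k = Q₁.coeff (d₂ - 1 - k)) :
    Ap d₁ d₂ (fun i => w i) = Q₁ := by
  rw [Ap, Fin.sum_univ_eq_sum_range (fun k => if k < d₂ then C (w k) * X ^ (d₂ - 1 - k) else 0)]
  rw [← Finset.sum_subset (Finset.range_subset_range.mpr (Nat.le_add_right d₂ d₁))
      (fun x _ hx => if_neg (by simp only [Finset.mem_range] at hx; omega))]
  rw [Finset.sum_congr rfl (fun k hk => by
    rw [if_pos (Finset.mem_range.mp hk), hw k (Finset.mem_range.mp hk),
      C_mul_X_pow_eq_monomial])]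
  rw [Finset.sum_range_reflect (fun t => (monomial t) (Q₁.coeff t)) d₂]
  exact (Q₁.as_sum_range' d₂ hd).symm

lemma Bp_eq (d₁ d₂ : ℕ) (w : ℕ → ℂ) (P₁ : ℂ[X]) (hd : P₁.natDegree < d₁)
    (hw : ∀ k, d₂ ≤ k → k < d₂ + d₁ → w k = -(P₁.coeff (d₁ - 1 - (k - d₂)))) :
    Bp d₁ d₂ (fun i => w i) = -P₁ := by
  rw [Bp, Fin.sum_univ_eq_sum_range
    (fun k => if d₂ ≤ k then C (w k) * X ^ (d₁ - 1 - (k - d₂)) else 0)]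
  rw [Finset.range_eq_Ico, ← Finset.sum_Ico_consecutive _ (Nat.zero_le d₂)
    (Nat.le_add_right d₂ d₁)]
  rw [Finset.sum_eq_zero (fun x hx => if_neg (by simp only [Finset.mem_Ico] at hx; omega)),
    zero_add]
  rw [Finset.sum_Ico_eq_sum_range]
  have h1 : d₂ + d₁ - d₂ = d₁ := by omega
  rw [h1]
  rw [Finset.sum_congr rfl (fun k hk => by
    have hk' := Finset.mem_range.mp hk
    rw [if_pos (Nat.le_add_right d₂ k), hw (d₂ + k) (Nat.le_add_right d₂ k) (by omega),
      (by omega : d₂ + k - d₂ = k), map_neg, neg_mul, C_mul_X_pow_eq_monomial])]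
  rw [Finset.sum_neg_distrib,
    Finset.sum_range_reflect (fun t => (monomial t) (P₁.coeff t)) d₁]
  rw [← P₁.as_sum_range' d₁ hd]

lemma mul_degree_lt (A P : ℂ[X]) {a b : ℕ} (hA : A.degree < (a : ℕ)) (hP : P.degree ≤ (b : ℕ)) :
    (A * P).degree < ((a + b : ℕ) : WithBot ℕ) := by
  rcases eq_or_ne A 0 with rfl | hA0
  · rw [zero_mul, degree_zero]; exact_mod_cast WithBot.bot_lt_coe (a + b)
  rcases eq_or_ne P 0 with rfl | hP0
  · rw [mul_zero, degree_zero]; exact_mod_cast WithBot.bot_lt_coe (a + b)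
  rw [degree_mul, degree_eq_natDegree hA0, degree_eq_natDegree hP0]
  have h1 : A.natDegree < a := (natDegree_lt_iff_degree_lt hA0).mpr hA
  have h2 : P.natDegree ≤ b := natDegree_le_iff_degree_le.mpr hP
  exact_mod_cast (by omega : A.natDegree + P.natDegree < a + b)


/-- If `P, Q ∈ ℂ[X]` have exact degrees `d₁`, `d₂` (nonzero leading
coefficients), then the Sylvester resultant `Res(P,Q)` vanishes if and only if `P` and `Q`
have a common complex root. -/
theorem stmt13 (d₁ d₂ : ℕ) (P Q : Polynomial ℂ)
    (hP : P.degree = (d₁ : ℕ)) (hQ : Q.degree = (d₂ : ℕ)) :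
    (sylvesterMatrix d₁ d₂ (fun t => P.coeff t) (fun t => Q.coeff t)).det = 0 ↔
      ∃ z : ℂ, P.eval z = 0 ∧ Q.eval z = 0 := by
  classical
  have hPne : P ≠ 0 := fun h => by simp [h] at hP
  have hQne : Q ≠ 0 := fun h => by simp [h] at hQ
  have hPd : P.natDegree = d₁ := natDegree_eq_of_degree_eq_some hP
  have hQd : Q.natDegree = d₂ := natDegree_eq_of_degree_eq_some hQ
  rw [← Matrix.det_transpose, ← Matrix.exists_mulVec_eq_zero_iff]
  constructor
  · rintro ⟨v, hv, hmul⟩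
    have hAB : Ap d₁ d₂ v * P + Bp d₁ d₂ v * Q = 0 := by
      ext m
      rw [coeff_zero]
      rcases lt_or_ge m (d₂ + d₁) with hm | hm
      · have hkey := key d₁ d₂ P Q hPd.le hQd.le v ⟨d₂ + d₁ - 1 - m, by omega⟩
        rw [hmul] at hkey
        simp only [Pi.zero_apply] at hkey
        have he : d₂ + d₁ - 1 - (d₂ + d₁ - 1 - m) = m := by omega
        rw [he] at hkey
        exact hkey.symm
      · have h1 : (Ap d₁ d₂ v * P).degree < ((d₂ + d₁ : ℕ) : WithBot ℕ) :=
          mul_degree_lt _ _ (Ap_degree d₁ d₂ v) (le_of_eq hP)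
        have h2 : (Bp d₁ d₂ v * Q).degree < ((d₂ + d₁ : ℕ) : WithBot ℕ) := by
          have := mul_degree_lt _ _ (Bp_degree d₁ d₂ v) (le_of_eq hQ)
          rwa [Nat.add_comm d₁ d₂] at this
        refine coeff_eq_zero_of_degree_lt (lt_of_lt_of_le
          (lt_of_le_of_lt (degree_add_le _ _) (max_lt h1 h2)) ?_)
        exact_mod_cast Nat.cast_le.mpr hm
    have hvz : Ap d₁ d₂ v = 0 → Bp d₁ d₂ v = 0 → False := by
      intro hA hB
      apply hv
      funext i
      rw [Pi.zero_apply]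
      by_cases h : (i : ℕ) < d₂
      · rw [← Ap_coeff d₁ d₂ v i h, hA, coeff_zero]
      · rw [← Bp_coeff d₁ d₂ v i (by omega), hB, coeff_zero]
    have hA0 : Ap d₁ d₂ v ≠ 0 := by
      intro hA
      have h' : Bp d₁ d₂ v * Q = 0 := by rwa [hA, zero_mul, zero_add] at hAB
      exact hvz hA ((mul_eq_zero.mp h').resolve_right hQne)
    have hB0 : Bp d₁ d₂ v ≠ 0 := by
      intro hB
      have h' : Ap d₁ d₂ v * P = 0 := by rwa [hB, zero_mul, add_zero] at hAB
      exact hvz ((mul_eq_zero.mp h').resolve_right hPne) hB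
    have hnc : ¬ IsCoprime P Q := by
      intro hc
      have hdvd : P ∣ Bp d₁ d₂ v * Q := ⟨-(Ap d₁ d₂ v), by linear_combination hAB⟩
      have hPB : P ∣ Bp d₁ d₂ v := hc.dvd_of_dvd_mul_right hdvd
      have hle : P.degree ≤ (Bp d₁ d₂ v).degree := degree_le_of_dvd hPB hB0
      rw [hP] at hle
      exact absurd (lt_of_le_of_lt hle (Bp_degree d₁ d₂ v)) (lt_irrefl _)
    have hgu : ¬ IsUnit (EuclideanDomain.gcd P Q) := fun h =>
      hnc (EuclideanDomain.gcd_isUnit_iff.mp h)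
    have hgne : EuclideanDomain.gcd P Q ≠ 0 := fun h =>
      hPne (EuclideanDomain.gcd_eq_zero_iff.mp h).1
    obtain ⟨z, hz⟩ := Complex.exists_root (degree_pos_of_ne_zero_of_nonunit hgne hgu)
    exact ⟨z, eval_eq_zero_of_dvd_of_eval_eq_zero (EuclideanDomain.gcd_dvd_left P Q) hz,
      eval_eq_zero_of_dvd_of_eval_eq_zero (EuclideanDomain.gcd_dvd_right P Q) hz⟩
  · rintro ⟨z, hz1, hz2⟩
    have hd1 : 0 < d₁ := by
      have := degree_pos_of_root hPne hz1; rw [hP] at this; exact_mod_cast this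
    have hd2 : 0 < d₂ := by
      have := degree_pos_of_root hQne hz2; rw [hQ] at this; exact_mod_cast this
    set P₁ := P /ₘ (X - C z) with hP₁def
    set Q₁ := Q /ₘ (X - C z) with hQ₁def
    have hPf : (X - C z) * P₁ = P := mul_divByMonic_eq_iff_isRoot.mpr hz1
    have hQf : (X - C z) * Q₁ = Q := mul_divByMonic_eq_iff_isRoot.mpr hz2
    have hP₁ne : P₁ ≠ 0 := fun h => hPne (by rw [← hPf, h, mul_zero])
    have hQ₁ne : Q₁ ≠ 0 := fun h => hQne (by rw [← hQf, h, mul_zero])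
    have hP₁d : P₁.natDegree = d₁ - 1 := by
      rw [hP₁def, natDegree_divByMonic P (monic_X_sub_C z), natDegree_X_sub_C, hPd]
    have hQ₁d : Q₁.natDegree = d₂ - 1 := by
      rw [hQ₁def, natDegree_divByMonic Q (monic_X_sub_C z), natDegree_X_sub_C, hQd]
    set w : ℕ → ℂ := fun k =>
      if k < d₂ then Q₁.coeff (d₂ - 1 - k) else -(P₁.coeff (d₁ - 1 - (k - d₂))) with hwdef
    refine ⟨fun i => w i, ?_, ?_⟩
    · intro h0
      have hk : Q₁.natDegree < d₂ := by omega
      have hcf := congrFun h0 (⟨d₂ - 1 - Q₁.natDegree, by omega⟩ : Fin (d₂ + d₁))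
      simp only [Pi.zero_apply] at hcf
      rw [hwdef] at hcf
      simp only at hcf
      rw [if_pos (by omega : d₂ - 1 - Q₁.natDegree < d₂),
        (by omega : d₂ - 1 - (d₂ - 1 - Q₁.natDegree) = Q₁.natDegree)] at hcf
      exact hQ₁ne (leadingCoeff_eq_zero.mp hcf)
    · funext j
      rw [Pi.zero_apply, key d₁ d₂ P Q hPd.le hQd.le (fun i => w i) j,
        Ap_eq d₁ d₂ w Q₁ (by omega) (fun k hk => by simp only [hwdef, if_pos hk]),
        Bp_eq d₁ d₂ w P₁ (by omega) (fun k hk1 hk2 => by simp only [hwdef]; rw [if_neg (by omega)])]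
      have hz0 : Q₁ * P + -P₁ * Q = 0 := by rw [← hPf, ← hQf]; ring
      rw [hz0, coeff_zero]
end

section
/- Let k ≤ n and l ≤ m be integers and let f₁, f₂ be Laurent polynomials as in the context, with nonzero extreme coefficients a_k, a_n, b_l, b_m. Then b_l^{−k} · b_m^{n} · Π^{[1]} = (−1)^{k(m−l)} · a_n^{m−l} · b_m^{n−k} · ∏_{x ∈ X} ∏_{y ∈ Y} (y − x), where the double product is over the multisets of roots X of P₁ and Y of P₂ counted with multiplicity. -/
open Polynomial

/-! Factoring `P₁(y) = a_n ∏ₓ (y - x)` splits `Π^{[1]}` as `(∏ Y)^k · a_n^{|Y|} · ∏ₓ ∏_y (y - x)`,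
and Vieta gives `∏ Y = (-1)^{m-l} b_l / b_m`, after which the powers of `b_l` cancel. -/

theorem Polynomial.Splits.prod_map_zpow_mul_eval {K : Type*} [Field K] {P : K[X]}
    (hP : P.Splits) (s : Multiset K) (k : ℤ) :
    (s.map fun y => y ^ k * P.eval y).prod =
      s.prod ^ k * P.leadingCoeff ^ s.card * (P.roots.map fun x => (s.map (· - x)).prod).prod := by
  simp only [Multiset.prod_map_mul, Multiset.prod_map_zpow, Multiset.map_id', hP.eval_eq_prod_roots,
    Multiset.map_const', Multiset.prod_replicate, mul_assoc]
  rw [Multiset.prod_map_prod_map]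

theorem zpow_neg_mul_zpow_mul_zpow {K : Type*} [Field K] {b p : K} (hb : b ≠ 0) (hp : p ≠ 0)
    (j k n : ℤ) :
    ((-1) ^ j * b * p) ^ (-k) * b ^ n * p ^ k = (-1) ^ (k * j) * b ^ (n - k) := by
  rw [mul_zpow, mul_zpow, ← zpow_mul, mul_neg, zpow_neg (-1 : K), ← inv_zpow, inv_neg_one, mul_comm j,
    zpow_neg p, sub_eq_neg_add, zpow_add₀ hb]
  field_simp

theorem stmt15_general (k n l m : ℤ) (hlm : l ≤ m)
    (P₁ P₂ : Polynomial ℂ)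
    (hd₂ : P₂.natDegree = (m - l).toNat)
    (an bl bm : ℂ)
    (han : P₁.leadingCoeff = an)
    (hbl : P₂.coeff 0 = bl) (hbm : P₂.leadingCoeff = bm)
    (hbl0 : bl ≠ 0) (hbm0 : bm ≠ 0) :
    bl ^ (-k) * bm ^ n * (P₂.roots.map fun y => y ^ k * P₁.eval y).prod =
      (-1 : ℂ) ^ (k * (m - l)) * an ^ (m - l) * bm ^ (n - k) *
        (P₁.roots.map fun x => (P₂.roots.map fun y => y - x).prod).prod := by
  have hdeg : (P₂.natDegree : ℤ) = m - l := by rw [hd₂, Int.toNat_of_nonneg (sub_nonneg.mpr hlm)]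
  have hcard : P₂.roots.card = P₂.natDegree := (IsAlgClosed.splits P₂).natDegree_eq_card_roots.symm
  have hvieta : bl = (-1) ^ (m - l) * bm * P₂.roots.prod := by
    rw [← hbl, ← hbm, (IsAlgClosed.splits P₂).coeff_zero_eq_leadingCoeff_mul_prod_roots, ← hdeg,
      zpow_natCast]
  have hprod0 : P₂.roots.prod ≠ 0 := right_ne_zero_of_mul (hvieta ▸ hbl0)
  have hcancel := zpow_neg_mul_zpow_mul_zpow hbm0 hprod0 (m - l) k n
  rw [← hvieta] at hcancel
  rw [(IsAlgClosed.splits P₁).prod_map_zpow_mul_eval, han, hcard, ← zpow_natCast an, hdeg]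
  linear_combination an ^ (m - l) * (P₁.roots.map fun x => (P₂.roots.map (· - x)).prod).prod * hcancel

/-- With `f₁ z = z^k * P₁ z`, `f₂ z = z^l * P₂ z` Laurent polynomials with
nonzero extreme coefficients,
`b_l^{-k} * b_m^n * Π^{[1]} = (-1)^{k(m-l)} * a_n^{m-l} * b_m^{n-k} * ∏_{x∈X} ∏_{y∈Y} (y - x)`,
where `X`, `Y` are the multisets of roots of `P₁`, `P₂` and
`Π^{[1]} = ∏_{y∈Y} f₁(y)`. -/
theorem stmt15 (k n l m : ℤ) (hkn : k ≤ n) (hlm : l ≤ m)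
    (P₁ P₂ : Polynomial ℂ)
    (hd₁ : P₁.natDegree = (n - k).toNat) (hd₂ : P₂.natDegree = (m - l).toNat)
    (ak an bl bm : ℂ)
    (hak : P₁.coeff 0 = ak) (han : P₁.leadingCoeff = an)
    (hbl : P₂.coeff 0 = bl) (hbm : P₂.leadingCoeff = bm)
    (hak0 : ak ≠ 0) (han0 : an ≠ 0) (hbl0 : bl ≠ 0) (hbm0 : bm ≠ 0) :
    bl ^ (-k) * bm ^ n * (P₂.roots.map fun y => y ^ k * P₁.eval y).prod =
      (-1 : ℂ) ^ (k * (m - l)) * an ^ (m - l) * bm ^ (n - k) *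
        (P₁.roots.map fun x => (P₂.roots.map fun y => y - x).prod).prod :=
  stmt15_general k n l m hlm P₁ P₂ hd₂ an bl bm han hbl hbm hbl0 hbm0
end
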